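/- arXiv:2604.14351 — 11 statements merged into one kernel-verified Lean document; each statement's English description precedes it below -/
import Mathlib

section
/- Let a ∈ ℝ with a ≠ 0, b > 0 and ω > 0. Then there exists z ∈ ℝ with z ≤ ω such that (1/2)·a·z² − b·z ≤ −(b/2)·min{b/|a|, ω}. In particular, the optimal value Φ* of the one-dimensional problem min_{z ≤ ω} (1/2)·a·z² − b·z satisfies Φ* ≤ −(b/2)·min{b/|a|, ω}. -/
theorem stmt0 (a b ω : ℝ) (ha : a ≠ 0) (hb : 0 < b) (hω : 0 < ω) :
    (∃ z : ℝ, z ≤ ω ∧ (1/2) * a * z^2 - b * z ≤ -(b/2) * min (b / |a|) ω) ∧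
    ∀ Φs : ℝ, IsGLB {y : ℝ | ∃ z : ℝ, z ≤ ω ∧ y = (1/2) * a * z^2 - b * z} Φs →
      Φs ≤ -(b/2) * min (b / |a|) ω := by
  have hA : 0 < |a| := abs_pos.mpr ha
  set z := min (b / |a|) ω with hz
  have hz0 : 0 < z := lt_min (div_pos hb hA) hω
  have hzω : z ≤ ω := min_le_right _ _
  have hzb : |a| * z ≤ b := by
    have : z ≤ b / |a| := min_le_left _ _
    calc |a| * z ≤ |a| * (b / |a|) := by nlinarith
    _ = b := by field_simp
  have key : (1/2) * a * z^2 - b * z ≤ -(b/2) * z := by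
    have h1 : a ≤ |a| := le_abs_self a
    nlinarith [sq_nonneg z, mul_pos hz0 hz0]
  refine ⟨⟨z, hzω, key⟩, ?_⟩
  intro Φs hGLB
  exact le_trans (hGLB.1 ⟨z, hzω, rfl⟩) key
end

section
/- Let J be a real m×n matrix with J ≠ 0 and let c ∈ ℝᵐ with c ≠ 0. Let ω > 0 and ε_v ∈ (0, 1]. Let α_C ∈ [0, ω] be a minimizer of the function α ↦ ‖c − α·J·Jᵀc‖ over [0, ω] (such a minimizer exists by compactness), and suppose v ∈ ℝⁿ satisfies the Cauchy decrease condition ‖c‖ − ‖c + Jv‖ ≥ ε_v·(‖c‖ − ‖c − α_C·J·Jᵀc‖). Then ‖c‖·(‖c‖ − ‖c + Jv‖) ≥ (ε_v/2)·min{1/‖J‖², ω}·‖Jᵀc‖². -/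
open RealInnerProductSpace



lemma stmt1_aux (G W omg M : ℝ) (hG : 0 < G) (hW : 0 < W) (homg : 0 < omg)
    (hM : 0 < M) (hMomg : M ≤ omg) (hMW : M * W ^ 2 ≤ G ^ 2) :
    ∃ α ∈ Set.Icc (0:ℝ) omg, 2 * α * G ^ 2 - α ^ 2 * W ^ 2 ≥ M * G ^ 2 := by
  by_cases hcase : G ^ 2 / W ^ 2 ≤ omg
  · refine ⟨G ^ 2 / W ^ 2, ⟨by positivity, hcase⟩, ?_⟩
    have hval : 2 * (G ^ 2 / W ^ 2) * G ^ 2 - (G ^ 2 / W ^ 2) ^ 2 * W ^ 2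
        = G ^ 4 / W ^ 2 := by field_simp; ring
    rw [hval, ge_iff_le, le_div_iff₀ (by positivity)]
    nlinarith
  · push_neg at hcase
    refine ⟨omg, ⟨le_of_lt homg, le_rfl⟩, ?_⟩
    have h1 : omg * W ^ 2 < G ^ 2 := by
      rwa [lt_div_iff₀ (by positivity)] at hcase
    nlinarith

lemma stmt1_fin (A B C G M e : ℝ) (hA : 0 < A) (hBA : B ≤ A)
    (he : 0 < e) (hD : A ^ 2 - B ^ 2 ≥ M * G)
    (hv : A - C ≥ e * (A - B)) :
    A * (A - C) ≥ e / 2 * M * G := by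
  nlinarith [mul_le_mul_of_nonneg_left hv hA.le, sq_nonneg (A - B),
    mul_nonneg he.le (sq_nonneg (A - B))]

/-- Lemma 3.2 (constraint model reduction) from the paper, with the Cauchy point
for the trust-region feasibility subproblem. -/
theorem stmt1 {m n : ℕ}
    (J : EuclideanSpace ℝ (Fin n) →L[ℝ] EuclideanSpace ℝ (Fin m))
    (c : EuclideanSpace ℝ (Fin m)) (hJ : J ≠ 0) (hc : c ≠ 0)
    (ω εv : ℝ) (hω : 0 < ω) (hεv : εv ∈ Set.Ioc (0 : ℝ) 1)
    (αC : ℝ) (hαC : αC ∈ Set.Icc (0 : ℝ) ω)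
    (hαCmin : ∀ α ∈ Set.Icc (0 : ℝ) ω,
      ‖c - αC • J (J.adjoint c)‖ ≤ ‖c - α • J (J.adjoint c)‖)
    (v : EuclideanSpace ℝ (Fin n))
    (hv : ‖c‖ - ‖c + J v‖ ≥ εv * (‖c‖ - ‖c - αC • J (J.adjoint c)‖)) :
    ‖c‖ * (‖c‖ - ‖c + J v‖) ≥ εv / 2 * min (1 / ‖J‖ ^ 2) ω * ‖J.adjoint c‖ ^ 2 := by
  set g := J.adjoint c with hg
  set w := J g with hwdef
  obtain ⟨hεv0, hεv1⟩ := hεv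
  have hcpos : (0:ℝ) < ‖c‖ := norm_pos_iff.mpr hc
  have hJpos : (0:ℝ) < ‖J‖ := norm_pos_iff.mpr hJ
  -- basic facts about the inner product
  have hcw : (inner ℝ c w : ℝ) = ‖g‖ ^ 2 := by
    rw [hwdef, ← ContinuousLinearMap.adjoint_inner_left, ← hg,
      real_inner_self_eq_norm_sq]
  -- the quadratic identity
  have hid : ∀ α : ℝ, ‖c - α • w‖ ^ 2 = ‖c‖ ^ 2 - 2 * α * ‖g‖ ^ 2 + α ^ 2 * ‖w‖ ^ 2 := by
    intro α
    have h1 : ‖c - α • w‖ ^ 2 = ‖c‖ ^ 2 - 2 * (inner ℝ c (α • w) : ℝ) + ‖α • w‖ ^ 2 :=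
      norm_sub_sq_real c (α • w)
    have h2 : (inner ℝ c (α • w) : ℝ) = α * (inner ℝ c w : ℝ) := real_inner_smul_right c w α
    have h3 : ‖α • w‖ ^ 2 = α ^ 2 * ‖w‖ ^ 2 := by
      rw [norm_smul]; rw [Real.norm_eq_abs]; rw [mul_pow, sq_abs]
    rw [h1, h2, h3, hcw]; ring
  -- ‖c - αC • w‖ ≤ ‖c‖
  have hle : ‖c - αC • w‖ ≤ ‖c‖ := by
    have := hαCmin 0 ⟨le_rfl, le_of_lt hω⟩
    simpa using this
  by_cases hg0 : g = 0
  · have : ‖g‖ = 0 := by rw [hg0, norm_zero]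
    rw [this]
    have h1 : εv * (‖c‖ - ‖c - αC • w‖) ≥ 0 :=
      mul_nonneg (le_of_lt hεv0) (by linarith)
    nlinarith [hv]
  · have hgpos : (0:ℝ) < ‖g‖ := norm_pos_iff.mpr hg0
    have hwle : ‖w‖ ≤ ‖J‖ * ‖g‖ := J.le_opNorm g
    have hwpos : (0:ℝ) < ‖w‖ := by
      by_contra h
      push_neg at h
      have hw0 : ‖w‖ = 0 := le_antisymm h (norm_nonneg _)
      have : (inner ℝ c w : ℝ) = 0 := by
        rw [norm_eq_zero.mp hw0, inner_zero_right]
      rw [hcw] at this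
      nlinarith
    set M := min (1 / ‖J‖ ^ 2) ω with hM
    have hMω : M ≤ ω := min_le_right _ _
    have hMJ : M ≤ 1 / ‖J‖ ^ 2 := min_le_left _ _
    have hMpos : 0 < M := lt_min (by positivity) hω
    -- key: exists α in [0,ω] with ψ(α) ≥ M * ‖g‖^2
    have hMW : M * ‖w‖ ^ 2 ≤ ‖g‖ ^ 2 := by
      have h1 : ‖w‖ ^ 2 ≤ ‖J‖ ^ 2 * ‖g‖ ^ 2 := by nlinarith [norm_nonneg w]
      have h2 : M * ‖J‖ ^ 2 ≤ 1 :=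
        (le_div_iff₀ (by positivity : (0:ℝ) < ‖J‖ ^ 2)).mp hMJ
      nlinarith
    have hkey := stmt1_aux ‖g‖ ‖w‖ ω M hgpos hwpos hω hMpos hMω hMW
    obtain ⟨α, hα, hψ⟩ := hkey
    have hmin := hαCmin α hα
    have hsq : ‖c - αC • w‖ ^ 2 ≤ ‖c - α • w‖ ^ 2 :=
      pow_le_pow_left₀ (norm_nonneg _) hmin 2
    have hD : ‖c‖ ^ 2 - ‖c - αC • w‖ ^ 2 ≥ M * ‖g‖ ^ 2 := by
      have := hid α
      linarith
    exact stmt1_fin ‖c‖ ‖c - αC • w‖ ‖c + J v‖ (‖g‖ ^ 2) M εv hcpos hle hεv0 hD hv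
end

section
/- Let J be a real m×n matrix with J ≠ 0 and let c ∈ ℝᵐ with c ≠ 0. Let ω > 0 and ε_v ∈ (0, 1]. Let α_C ∈ [0, ω] be a minimizer of the function α ↦ ‖c − α·J·Jᵀc‖ over [0, ω], and suppose v ∈ ℝⁿ satisfies the Cauchy decrease condition ‖c‖ − ‖c + Jv‖ ≥ ε_v·(‖c‖ − ‖c − α_C·J·Jᵀc‖). Then ‖v‖ ≥ (ε_v/2)·min{1/‖J‖², ω}·‖Jᵀc‖² / (‖J‖·‖c‖). -/
set_option maxHeartbeats 1000000 in
/-- Lemma 3.2 (constraint model reduction) from the paper, with the Cauchy point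
for the trust-region feasibility subproblem. -/
theorem stmt2 {m n : ℕ}
    (J : EuclideanSpace ℝ (Fin n) →L[ℝ] EuclideanSpace ℝ (Fin m))
    (c : EuclideanSpace ℝ (Fin m)) (hJ : J ≠ 0) (hc : c ≠ 0)
    (ω εv : ℝ) (hω : 0 < ω) (hεv : εv ∈ Set.Ioc (0 : ℝ) 1)
    (αC : ℝ) (hαC : αC ∈ Set.Icc (0 : ℝ) ω)
    (hαCmin : ∀ α ∈ Set.Icc (0 : ℝ) ω,
      ‖c - αC • J (J.adjoint c)‖ ≤ ‖c - α • J (J.adjoint c)‖)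
    (v : EuclideanSpace ℝ (Fin n))
    (hv : ‖c‖ - ‖c + J v‖ ≥ εv * (‖c‖ - ‖c - αC • J (J.adjoint c)‖)) :
    ‖v‖ ≥ εv / 2 * min (1 / ‖J‖ ^ 2) ω * ‖J.adjoint c‖ ^ 2 / (‖J‖ * ‖c‖) := by
  set g := J.adjoint c with hg
  set d := J g with hd
  clear_value d
  have hJpos : 0 < ‖J‖ := norm_pos_iff.mpr hJ
  have hcpos : 0 < ‖c‖ := norm_pos_iff.mpr hc
  have hεv0 : 0 < εv := hεv.1
  by_cases hg0 : g = 0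
  · rw [hg0]
    simp
  have hgpos : 0 < ‖g‖ := norm_pos_iff.mpr hg0
  have hgd : inner ℝ c d = ‖g‖ ^ 2 := by
    rw [hd, ← ContinuousLinearMap.adjoint_inner_left, ← hg,
      real_inner_self_eq_norm_sq]
  have hdpos : 0 < ‖d‖ := by
    by_contra h
    push_neg at h
    have : ‖d‖ = 0 := le_antisymm h (norm_nonneg _)
    have hd0 : d = 0 := norm_eq_zero.mp this
    have : (inner ℝ c d : ℝ) = 0 := by rw [hd0, inner_zero_right]
    nlinarith [hgd]
  have hdJ : ‖d‖ ≤ ‖J‖ * ‖g‖ := by rw [hd]; exact J.le_opNorm g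
  have hexp : ∀ α : ℝ, ‖c - α • d‖ ^ 2 = ‖c‖ ^ 2 - 2 * α * ‖g‖ ^ 2 + α ^ 2 * ‖d‖ ^ 2 := by
    intro α
    have h1 : ‖α • d‖ ^ 2 = α ^ 2 * ‖d‖ ^ 2 := by
      rw [norm_smul, mul_pow, Real.norm_eq_abs, sq_abs]
    rw [norm_sub_sq_real, h1, real_inner_smul_right, hgd]
    ring
  set μ := min (1 / ‖J‖ ^ 2) ω with hμ
  have hμpos : 0 < μ := lt_min (by positivity) hω
  have hμω : μ ≤ ω := min_le_right _ _
  have hμJ : μ ≤ 1 / ‖J‖ ^ 2 := min_le_left _ _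
  -- there is a good α
  have key : ∃ α ∈ Set.Icc (0 : ℝ) ω, ‖c - α • d‖ ^ 2 ≤ ‖c‖ ^ 2 - μ * ‖g‖ ^ 2 := by
    by_cases hcase : ‖g‖ ^ 2 / ‖d‖ ^ 2 ≤ ω
    · refine ⟨‖g‖ ^ 2 / ‖d‖ ^ 2, ⟨by positivity, hcase⟩, ?_⟩
      rw [hexp]
      have hb2 : (‖g‖ ^ 2 / ‖d‖ ^ 2) ^ 2 * ‖d‖ ^ 2 = (‖g‖ ^ 2 / ‖d‖ ^ 2) * ‖g‖ ^ 2 := by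
        field_simp
      have hβJ : 1 / ‖J‖ ^ 2 ≤ ‖g‖ ^ 2 / ‖d‖ ^ 2 := by
        rw [div_le_div_iff₀ (by positivity) (by positivity)]
        nlinarith
      have hμβ : μ ≤ ‖g‖ ^ 2 / ‖d‖ ^ 2 := le_trans hμJ hβJ
      have hμβ2 : μ * ‖g‖ ^ 2 ≤ (‖g‖ ^ 2 / ‖d‖ ^ 2) * ‖g‖ ^ 2 :=
        mul_le_mul_of_nonneg_right hμβ (sq_nonneg ‖g‖)
      linarith
    · push_neg at hcase
      refine ⟨ω, ⟨le_of_lt hω, le_refl ω⟩, ?_⟩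
      rw [hexp]
      have hωd : ω * ‖d‖ ^ 2 < ‖g‖ ^ 2 := by
        rw [lt_div_iff₀ (by positivity)] at hcase
        linarith
      nlinarith [mul_lt_mul_of_pos_left hωd hω,
        mul_le_mul_of_nonneg_right hμω (sq_nonneg ‖g‖)]
  obtain ⟨α, hαmem, hαineq⟩ := key
  have hC2 : ‖c - αC • d‖ ^ 2 ≤ ‖c‖ ^ 2 - μ * ‖g‖ ^ 2 := by
    have h1 := hαCmin α hαmem
    have h2 : ‖c - αC • d‖ ^ 2 ≤ ‖c - α • d‖ ^ 2 :=
      pow_le_pow_left₀ (norm_nonneg _) h1 2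
    linarith
  set t := ‖c - αC • d‖ with ht
  have ht0 : 0 ≤ t := norm_nonneg _
  have htc : t ≤ ‖c‖ := by nlinarith [mul_pos hμpos (pow_pos hgpos 2)]
  have hdec : ‖c‖ - t ≥ μ * ‖g‖ ^ 2 / (2 * ‖c‖) := by
    rw [ge_iff_le, div_le_iff₀ (by positivity)]
    nlinarith [mul_nonneg (sub_nonneg.mpr htc) ht0]
  have hJv : ‖c‖ - ‖c + J v‖ ≤ ‖J‖ * ‖v‖ := by
    have h1 : ‖c‖ ≤ ‖c + J v‖ + ‖J v‖ := by
      calc ‖c‖ = ‖(c + J v) - J v‖ := by rw [add_sub_cancel_right]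
        _ ≤ ‖c + J v‖ + ‖J v‖ := norm_sub_le _ _
    have h2 : ‖J v‖ ≤ ‖J‖ * ‖v‖ := J.le_opNorm v
    linarith
  have hchain : εv * (μ * ‖g‖ ^ 2 / (2 * ‖c‖)) ≤ ‖J‖ * ‖v‖ := by
    have h1 : εv * (μ * ‖g‖ ^ 2 / (2 * ‖c‖)) ≤ εv * (‖c‖ - t) :=
      mul_le_mul_of_nonneg_left hdec (le_of_lt hεv0)
    linarith [hv]
  rw [ge_iff_le, div_le_iff₀ (by positivity)]
  have : εv * (μ * ‖g‖ ^ 2 / (2 * ‖c‖)) * ‖c‖ ≤ ‖J‖ * ‖v‖ * ‖c‖ :=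
    mul_le_mul_of_nonneg_right hchain (le_of_lt hcpos)
  have heq : εv * (μ * ‖g‖ ^ 2 / (2 * ‖c‖)) * ‖c‖ = εv / 2 * μ * ‖g‖ ^ 2 := by
    field_simp
  rw [heq] at this
  nlinarith [this]
end

section
/- Let J be a real m×n matrix, let H be a symmetric real n×n matrix with ‖H‖ ≤ κ_H (κ_H > 0) and uᵀHu ≥ ζ‖u‖² for all u ∈ Null(J), where ζ > 0. Let g, v ∈ ℝⁿ, and suppose u ∈ Null(J) and y ∈ ℝᵐ satisfy Hu + Jᵀy = −(g + Hv). Then ‖u‖ ≤ ζ⁻¹·(‖g + Jᵀy‖ + κ_H·‖v‖) and ‖u‖ ≤ ζ⁻¹·(‖g‖ + κ_H·‖v‖). Consequently, if in addition ‖v‖ ≤ ω‖Jᵀc‖ for some c ∈ ℝᵐ and ω > 0, and ‖g‖ ≤ κ_g, ‖J‖ ≤ κ_J, ‖c‖ ≤ κ_c, then ‖u‖ ≤ ζ⁻¹·(κ_g + κ_H·ω·κ_J·κ_c). -/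
open scoped RealInnerProductSpace

private lemma stmt3_div_helper {ζ B r : ℝ} (hζ : 0 < ζ) (hB : 0 ≤ B) (hr : 0 ≤ r)
    (h : ζ * r ^ 2 ≤ B * r) : r ≤ ζ⁻¹ * B := by
  rcases eq_or_lt_of_le hr with h0 | h0
  · rw [← h0]; positivity
  · have hb : ζ * r ≤ B := by nlinarith
    calc r = ζ⁻¹ * (ζ * r) := by field_simp
    _ ≤ ζ⁻¹ * B := mul_le_mul_of_nonneg_left hb (by positivity)

set_option maxHeartbeats 1000000 in
/-- Lemma 3.4 of the paper: bounds on the norm of the (true) tangential step. -/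
theorem stmt3 {m n : ℕ}
    (J : EuclideanSpace ℝ (Fin n) →L[ℝ] EuclideanSpace ℝ (Fin m))
    (H : EuclideanSpace ℝ (Fin n) →L[ℝ] EuclideanSpace ℝ (Fin n))
    (κH ζ : ℝ) (hκHpos : 0 < κH) (hζ : 0 < ζ)
    (hHsym : IsSelfAdjoint H) (hHnorm : ‖H‖ ≤ κH)
    (hHpd : ∀ u ∈ LinearMap.ker (J : EuclideanSpace ℝ (Fin n) →ₗ[ℝ] EuclideanSpace ℝ (Fin m)), ζ * ‖u‖ ^ 2 ≤ ⟪H u, u⟫)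
    (g v : EuclideanSpace ℝ (Fin n))
    (u : EuclideanSpace ℝ (Fin n)) (y : EuclideanSpace ℝ (Fin m))
    (hu : u ∈ LinearMap.ker (J : EuclideanSpace ℝ (Fin n) →ₗ[ℝ] EuclideanSpace ℝ (Fin m)))
    (heq : H u + J.adjoint y = -(g + H v)) :
    ‖u‖ ≤ ζ⁻¹ * (‖g + J.adjoint y‖ + κH * ‖v‖) ∧
    ‖u‖ ≤ ζ⁻¹ * (‖g‖ + κH * ‖v‖) ∧
    ∀ (c : EuclideanSpace ℝ (Fin m)) (ω κg κJ κc : ℝ), 0 < ω →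
      ‖v‖ ≤ ω * ‖J.adjoint c‖ → ‖g‖ ≤ κg → ‖J‖ ≤ κJ → ‖c‖ ≤ κc →
      ‖u‖ ≤ ζ⁻¹ * (κg + κH * ω * κJ * κc) := by
  have hJu : J u = 0 := hu
  have hadj : ⟪J.adjoint y, u⟫ = 0 := by
    rw [ContinuousLinearMap.adjoint_inner_left, hJu, inner_zero_right]
  have hHu : H u = -(g + H v) - J.adjoint y := by
    rw [← heq]; abel
  have hHv : ‖H v‖ ≤ κH * ‖v‖ := by
    calc ‖H v‖ ≤ ‖H‖ * ‖v‖ := H.le_opNorm v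
    _ ≤ κH * ‖v‖ := mul_le_mul_of_nonneg_right hHnorm (norm_nonneg _)
  have key : ⟪H u, u⟫ = -⟪g, u⟫ - ⟪H v, u⟫ := by
    rw [hHu, inner_sub_left, hadj, inner_neg_left, inner_add_left]
    ring
  have hHvu : -⟪H v, u⟫ ≤ κH * ‖v‖ * ‖u‖ := by
    have := abs_real_inner_le_norm (H v) u
    have h2 : ‖H v‖ * ‖u‖ ≤ κH * ‖v‖ * ‖u‖ :=
      mul_le_mul_of_nonneg_right hHv (norm_nonneg _)
    nlinarith [abs_nonneg (⟪H v, u⟫), le_abs_self (-⟪H v, u⟫), abs_neg (⟪H v, u⟫)]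
  have h2 : ‖u‖ ≤ ζ⁻¹ * (‖g‖ + κH * ‖v‖) := by
    apply stmt3_div_helper hζ (by positivity) (norm_nonneg _)
    have hgu : -⟪g, u⟫ ≤ ‖g‖ * ‖u‖ := by
      have := abs_real_inner_le_norm g u
      nlinarith [le_abs_self (-⟪g, u⟫), abs_neg (⟪g, u⟫)]
    calc ζ * ‖u‖ ^ 2 ≤ ⟪H u, u⟫ := hHpd u hu
    _ = -⟪g, u⟫ - ⟪H v, u⟫ := key
    _ ≤ ‖g‖ * ‖u‖ + κH * ‖v‖ * ‖u‖ := by linarith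
    _ = (‖g‖ + κH * ‖v‖) * ‖u‖ := by ring
  have h1 : ‖u‖ ≤ ζ⁻¹ * (‖g + J.adjoint y‖ + κH * ‖v‖) := by
    apply stmt3_div_helper hζ (by positivity) (norm_nonneg _)
    have hgu : -⟪g, u⟫ ≤ ‖g + J.adjoint y‖ * ‖u‖ := by
      have he : ⟪g + J.adjoint y, u⟫ = ⟪g, u⟫ := by
        rw [inner_add_left, hadj]; ring
      have := abs_real_inner_le_norm (g + J.adjoint y) u
      rw [he] at this
      nlinarith [le_abs_self (-⟪g, u⟫), abs_neg (⟪g, u⟫)]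
    calc ζ * ‖u‖ ^ 2 ≤ ⟪H u, u⟫ := hHpd u hu
    _ = -⟪g, u⟫ - ⟪H v, u⟫ := key
    _ ≤ ‖g + J.adjoint y‖ * ‖u‖ + κH * ‖v‖ * ‖u‖ := by linarith
    _ = (‖g + J.adjoint y‖ + κH * ‖v‖) * ‖u‖ := by ring
  refine ⟨h1, h2, ?_⟩
  intro c ω κg κJ κc hω hv hg hJ hc
  have hκJ : 0 ≤ κJ := le_trans (norm_nonneg _) hJ
  have hκc : 0 ≤ κc := le_trans (norm_nonneg _) hc
  have hJc : ‖J.adjoint c‖ ≤ κJ * κc := by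
    calc ‖J.adjoint c‖ ≤ ‖J.adjoint‖ * ‖c‖ := (J.adjoint).le_opNorm c
    _ = ‖J‖ * ‖c‖ := by rw [LinearIsometryEquiv.norm_map ContinuousLinearMap.adjoint J]
    _ ≤ κJ * κc := mul_le_mul hJ hc (norm_nonneg _) hκJ
  have hvb : ‖v‖ ≤ ω * (κJ * κc) :=
    le_trans hv (mul_le_mul_of_nonneg_left hJc hω.le)
  calc ‖u‖ ≤ ζ⁻¹ * (‖g‖ + κH * ‖v‖) := h2
  _ ≤ ζ⁻¹ * (κg + κH * ω * κJ * κc) := by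
    apply mul_le_mul_of_nonneg_left _ (by positivity)
    have : κH * ‖v‖ ≤ κH * (ω * (κJ * κc)) :=
      mul_le_mul_of_nonneg_left hvb hκHpos.le
    nlinarith
end

section
/- Let J be a real m×n matrix and H a symmetric real n×n matrix with uᵀHu ≥ ζ‖u‖² for all u ∈ Null(J), where ζ > 0, and let v ∈ ℝⁿ with v ∈ Range(Jᵀ), and β > 0. Then: (a) for every w ∈ ℝⁿ there is a unique vector T(w) ∈ Null(J) with H·T(w) + w + Hv ∈ Range(Jᵀ) (the tangential step for w). Moreover, let (Ω, 𝓕, ℙ) be a probability space, ḡ ∈ ℝⁿ, and let g be a square-integrable ℝⁿ-valued random vector with 𝔼[g] = ḡ and 𝔼[‖g − ḡ‖²] ≤ M for some M > 0. Set u := T(g), u_true := T(ḡ), d := βu + v, d_true := βu_true + v. Then (b) 𝔼[u] = u_true and 𝔼[d] = d_true, and (c) 𝔼[‖d − d_true‖] ≤ β·ζ⁻¹·√M. -/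
open MeasureTheory
open scoped RealInnerProductSpace

lemma range_adjoint_eq {m n : ℕ}
    (J : EuclideanSpace ℝ (Fin n) →L[ℝ] EuclideanSpace ℝ (Fin m)) :
    LinearMap.range (J.adjoint : EuclideanSpace ℝ (Fin m) →ₗ[ℝ] EuclideanSpace ℝ (Fin n)) = (LinearMap.ker (J : EuclideanSpace ℝ (Fin n) →ₗ[ℝ] EuclideanSpace ℝ (Fin m)))ᗮ := by
  have h1 : (LinearMap.range (J.adjoint : EuclideanSpace ℝ (Fin m) →ₗ[ℝ] EuclideanSpace ℝ (Fin n)) : Submodule ℝ (EuclideanSpace ℝ (Fin n)))ᗮ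
      = LinearMap.ker (J : EuclideanSpace ℝ (Fin n) →ₗ[ℝ] EuclideanSpace ℝ (Fin m)) := by
    ext u
    simp only [Submodule.mem_orthogonal, LinearMap.mem_range, LinearMap.mem_ker]
    constructor
    · intro h
      have h2 : ∀ y, ⟪y, J u⟫ = 0 := by
        intro y
        have := h (J.adjoint y) ⟨y, rfl⟩
        rwa [ContinuousLinearMap.adjoint_inner_left] at this
      have := h2 (J u)
      rw [← inner_self_eq_zero (𝕜 := ℝ)]; exact this
    · intro h x ⟨y, hy⟩
      subst hy
      rw [ContinuousLinearMap.coe_coe, ContinuousLinearMap.adjoint_inner_left,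
        ← ContinuousLinearMap.coe_coe, h, inner_zero_right]
  rw [← h1, Submodule.orthogonal_orthogonal]

set_option maxHeartbeats 1000000 in
/-- Lemma 3.5 of the paper: existence/uniqueness of the tangential step, unbiasedness of
the stochastic step, and the bound on the expected deviation of the full step. -/
theorem stmt4 {m n : ℕ}
    (J : EuclideanSpace ℝ (Fin n) →L[ℝ] EuclideanSpace ℝ (Fin m))
    (H : EuclideanSpace ℝ (Fin n) →L[ℝ] EuclideanSpace ℝ (Fin n))
    (ζ : ℝ) (hζ : 0 < ζ) (hHsym : IsSelfAdjoint H)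
    (hHpd : ∀ u ∈ LinearMap.ker
        (J : EuclideanSpace ℝ (Fin n) →ₗ[ℝ] EuclideanSpace ℝ (Fin m)), ζ * ‖u‖ ^ 2 ≤ ⟪H u, u⟫)
    (v : EuclideanSpace ℝ (Fin n)) (hv : v ∈ LinearMap.range
        (J.adjoint : EuclideanSpace ℝ (Fin m) →ₗ[ℝ] EuclideanSpace ℝ (Fin n)))
    (β : ℝ) (hβ : 0 < β)
    {Ω : Type*} [MeasurableSpace Ω] (μ : Measure Ω) [IsProbabilityMeasure μ]
    (gbar : EuclideanSpace ℝ (Fin n)) (g : Ω → EuclideanSpace ℝ (Fin n))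
    (hgL2 : MemLp g 2 μ) (hgmean : ∫ ω, g ω ∂μ = gbar)
    (M : ℝ) (hM : 0 < M) (hgvar : ∫ ω, ‖g ω - gbar‖ ^ 2 ∂μ ≤ M)
    (T : EuclideanSpace ℝ (Fin n) → EuclideanSpace ℝ (Fin n))
    (hT : ∀ w, T w ∈ LinearMap.ker
        (J : EuclideanSpace ℝ (Fin n) →ₗ[ℝ] EuclideanSpace ℝ (Fin m)) ∧
      H (T w) + w + H v ∈ LinearMap.range
        (J.adjoint : EuclideanSpace ℝ (Fin m) →ₗ[ℝ] EuclideanSpace ℝ (Fin n))) :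
    (∀ w, ∃! t, t ∈ LinearMap.ker
          (J : EuclideanSpace ℝ (Fin n) →ₗ[ℝ] EuclideanSpace ℝ (Fin m)) ∧
        H t + w + H v ∈ LinearMap.range
          (J.adjoint : EuclideanSpace ℝ (Fin m) →ₗ[ℝ] EuclideanSpace ℝ (Fin n))) ∧
    (∫ ω, T (g ω) ∂μ) = T gbar ∧
    (∫ ω, (β • T (g ω) + v) ∂μ) = β • T gbar + v ∧
    (∫ ω, ‖(β • T (g ω) + v) - (β • T gbar + v)‖ ∂μ) ≤ β * ζ⁻¹ * Real.sqrt M := by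
  have hrange := range_adjoint_eq J
  -- inner product of a range element with a kernel element is 0
  have hperp : ∀ a ∈ LinearMap.range (J.adjoint : EuclideanSpace ℝ (Fin m) →ₗ[ℝ] EuclideanSpace ℝ (Fin n)), ∀ u ∈ LinearMap.ker (J : EuclideanSpace ℝ (Fin n) →ₗ[ℝ] EuclideanSpace ℝ (Fin m)), ⟪a, u⟫ = 0 := by
    intro a ha u hu
    rw [hrange] at ha
    exact (Submodule.mem_orthogonal' _ _).mp ha u hu
  -- uniqueness
  have huniq : ∀ w t₁ t₂ : EuclideanSpace ℝ (Fin n),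
      (t₁ ∈ LinearMap.ker (J : EuclideanSpace ℝ (Fin n) →ₗ[ℝ] EuclideanSpace ℝ (Fin m)) ∧ H t₁ + w + H v ∈ LinearMap.range (J.adjoint : EuclideanSpace ℝ (Fin m) →ₗ[ℝ] EuclideanSpace ℝ (Fin n))) →
      (t₂ ∈ LinearMap.ker (J : EuclideanSpace ℝ (Fin n) →ₗ[ℝ] EuclideanSpace ℝ (Fin m)) ∧ H t₂ + w + H v ∈ LinearMap.range (J.adjoint : EuclideanSpace ℝ (Fin m) →ₗ[ℝ] EuclideanSpace ℝ (Fin n))) → t₁ = t₂ := by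
    intro w t₁ t₂ h₁ h₂
    have hker : t₁ - t₂ ∈ LinearMap.ker (J : EuclideanSpace ℝ (Fin n) →ₗ[ℝ] EuclideanSpace ℝ (Fin m)) := Submodule.sub_mem _ h₁.1 h₂.1
    have hr : H (t₁ - t₂) ∈ LinearMap.range (J.adjoint : EuclideanSpace ℝ (Fin m) →ₗ[ℝ] EuclideanSpace ℝ (Fin n)) := by
      have := Submodule.sub_mem _ h₁.2 h₂.2
      have heq : (H t₁ + w + H v) - (H t₂ + w + H v) = H (t₁ - t₂) := by
        rw [map_sub]; abel
      rwa [heq] at this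
    have h0 : ⟪H (t₁ - t₂), t₁ - t₂⟫ = 0 := hperp _ hr _ hker
    have := hHpd _ hker
    rw [h0] at this
    have : ‖t₁ - t₂‖ ^ 2 ≤ 0 := by nlinarith
    have : t₁ - t₂ = 0 := by
      have h2 : ‖t₁ - t₂‖ = 0 := by nlinarith [norm_nonneg (t₁ - t₂)]
      exact norm_eq_zero.mp h2
    exact sub_eq_zero.mp this
  -- contraction estimate
  have hcontract : ∀ w₁ w₂ : EuclideanSpace ℝ (Fin n), ‖T w₁ - T w₂‖ ≤ ζ⁻¹ * ‖w₁ - w₂‖ := by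
    intro w₁ w₂
    set u := T w₁ - T w₂ with hu
    have hker : u ∈ LinearMap.ker (J : EuclideanSpace ℝ (Fin n) →ₗ[ℝ] EuclideanSpace ℝ (Fin m)) := Submodule.sub_mem _ (hT w₁).1 (hT w₂).1
    have hr : H u + (w₁ - w₂) ∈ LinearMap.range (J.adjoint : EuclideanSpace ℝ (Fin m) →ₗ[ℝ] EuclideanSpace ℝ (Fin n)) := by
      have := Submodule.sub_mem _ (hT w₁).2 (hT w₂).2
      have heq : (H (T w₁) + w₁ + H v) - (H (T w₂) + w₂ + H v) = H u + (w₁ - w₂) := by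
        rw [hu, map_sub]; abel
      rwa [heq] at this
    have h0 : ⟪H u + (w₁ - w₂), u⟫ = 0 := hperp _ hr _ hker
    rw [inner_add_left] at h0
    have h1 : ζ * ‖u‖ ^ 2 ≤ ⟪H u, u⟫ := hHpd _ hker
    have h2 : ⟪H u, u⟫ = -⟪w₁ - w₂, u⟫ := by linarith
    have h3 : ζ * ‖u‖ ^ 2 ≤ ‖w₁ - w₂‖ * ‖u‖ := by
      calc ζ * ‖u‖ ^ 2 ≤ -⟪w₁ - w₂, u⟫ := by rw [← h2]; exact h1
        _ ≤ |⟪w₁ - w₂, u⟫| := neg_le_abs _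
        _ ≤ ‖w₁ - w₂‖ * ‖u‖ := abs_real_inner_le_norm _ _
    rcases eq_or_ne u 0 with h | h
    · rw [h, norm_zero]
      positivity
    · have hn : 0 < ‖u‖ := norm_pos_iff.mpr h
      rw [inv_mul_eq_div, le_div_iff₀ hζ]
      nlinarith
  -- affine structure of T
  have hTsol : ∀ w t, t ∈ LinearMap.ker (J : EuclideanSpace ℝ (Fin n) →ₗ[ℝ] EuclideanSpace ℝ (Fin m)) →
      H t + w + H v ∈ LinearMap.range (J.adjoint : EuclideanSpace ℝ (Fin m) →ₗ[ℝ] EuclideanSpace ℝ (Fin n)) → T w = t :=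
    fun w t h1 h2 => huniq w (T w) t (hT w) ⟨h1, h2⟩
  have hadd : ∀ w₁ w₂, T (w₁ + w₂) = T w₁ + T w₂ - T 0 := by
    intro w₁ w₂
    apply hTsol
    · exact Submodule.sub_mem _ (Submodule.add_mem _ (hT w₁).1 (hT w₂).1) (hT 0).1
    · have heq : H (T w₁ + T w₂ - T 0) + (w₁ + w₂) + H v =
          (H (T w₁) + w₁ + H v) + (H (T w₂) + w₂ + H v) - (H (T 0) + 0 + H v) := by
        rw [map_sub, map_add]; abel
      rw [heq]
      exact Submodule.sub_mem _ (Submodule.add_mem _ (hT w₁).2 (hT w₂).2) (hT 0).2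
  have hsmul : ∀ (c : ℝ) w, T (c • w) = c • (T w - T 0) + T 0 := by
    intro c w
    apply hTsol
    · exact Submodule.add_mem _ (Submodule.smul_mem _ _
        (Submodule.sub_mem _ (hT w).1 (hT 0).1)) (hT 0).1
    · have heq : H (c • (T w - T 0) + T 0) + (c • w) + H v =
          c • (H (T w) + w + H v) + (1 - c) • (H (T 0) + 0 + H v) := by
        rw [map_add, ContinuousLinearMap.map_smul, map_sub]
        module
      rw [heq]
      exact Submodule.add_mem _ (Submodule.smul_mem _ _ (hT w).2)
        (Submodule.smul_mem _ _ (hT 0).2)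
  -- the continuous linear part
  obtain ⟨L, hLapp⟩ : ∃ L : EuclideanSpace ℝ (Fin n) →L[ℝ] EuclideanSpace ℝ (Fin n),
      ∀ w, L w = T w - T 0 := by
    refine ⟨LinearMap.mkContinuous ?_ ζ⁻¹ ?_, ?_⟩
    · exact
    { toFun := fun w => T w - T 0
      map_add' := fun w₁ w₂ => by show T (w₁ + w₂) - T 0 = (T w₁ - T 0) + (T w₂ - T 0); rw [hadd]; abel
      map_smul' := fun c w => by show T (c • w) - T 0 = c • (T w - T 0); rw [hsmul]; abel }
    · intro w
      have := hcontract w 0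
      simpa using this
    · intro w
      rfl
  have hTeq : ∀ w, T w = L w + T 0 := by
    intro w
    rw [hLapp]
    abel
  -- integrability
  have hgint : Integrable g μ := hgL2.integrable one_le_two
  have hTgint : Integrable (fun ω => T (g ω)) μ := by
    have : (fun ω => T (g ω)) = fun ω => L (g ω) + T 0 := funext fun ω => hTeq _
    rw [this]
    exact (L.integrable_comp hgint).add (integrable_const _)
  -- mean of u
  have hmean : (∫ ω, T (g ω) ∂μ) = T gbar := by
    have h1 : (∫ ω, T (g ω) ∂μ) = (∫ ω, L (g ω) + T 0 ∂μ) := by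
      congr 1; exact funext fun ω => hTeq _
    rw [h1, integral_add (L.integrable_comp hgint) (integrable_const _),
      L.integral_comp_comm hgint, hgmean, integral_const]
    simp [hTeq gbar]
  refine ⟨fun w => ⟨T w, hT w, fun t ht => huniq w t (T w) ht (hT w)⟩, hmean, ?_, ?_⟩
  · have h2 : Integrable (fun ω => β • T (g ω)) μ := hTgint.smul β
    rw [integral_add h2 (integrable_const v), integral_smul, hmean, integral_const]
    simp
  · -- the deviation bound
    have hptwise : ∀ ω, ‖(β • T (g ω) + v) - (β • T gbar + v)‖ ≤
        β * ζ⁻¹ * ‖g ω - gbar‖ := by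
      intro ω
      have h1 : (β • T (g ω) + v) - (β • T gbar + v) = β • (T (g ω) - T gbar) := by
        rw [smul_sub]; abel
      rw [h1, norm_smul, Real.norm_eq_abs, abs_of_pos hβ, mul_assoc]
      exact mul_le_mul_of_nonneg_left (hcontract _ _) hβ.le
    have hFint : Integrable (fun ω => ‖g ω - gbar‖) μ :=
      (hgint.sub (integrable_const gbar)).norm
    have hF2mem : MemLp (fun ω => ‖g ω - gbar‖) 2 μ :=
      (hgL2.sub (memLp_const gbar)).norm
    have hF2int : Integrable (fun ω => ‖g ω - gbar‖ ^ 2) μ := hF2mem.integrable_sq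
    set I := ∫ ω, ‖g ω - gbar‖ ∂μ with hI
    have hInn : 0 ≤ I := integral_nonneg fun ω => norm_nonneg _
    have hsq : I ^ 2 ≤ ∫ ω, ‖g ω - gbar‖ ^ 2 ∂μ := by
      have hnn : 0 ≤ ∫ ω, (‖g ω - gbar‖ - I) ^ 2 ∂μ :=
        integral_nonneg fun ω => sq_nonneg _
      have e1 : Integrable (fun ω => ‖g ω - gbar‖ ^ 2 - 2 * I * ‖g ω - gbar‖) μ :=
        hF2int.sub (hFint.const_mul _)
      have hexp : ∫ ω, (‖g ω - gbar‖ - I) ^ 2 ∂μ =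
          (∫ ω, ‖g ω - gbar‖ ^ 2 ∂μ) - 2 * I * I + I ^ 2 := by
        calc ∫ ω, (‖g ω - gbar‖ - I) ^ 2 ∂μ
            = ∫ ω, (‖g ω - gbar‖ ^ 2 - 2 * I * ‖g ω - gbar‖ + I ^ 2) ∂μ := by
              congr 1; funext ω; ring
          _ = (∫ ω, (‖g ω - gbar‖ ^ 2 - 2 * I * ‖g ω - gbar‖) ∂μ)
              + ∫ _ω, (I ^ 2 : ℝ) ∂μ := integral_add e1 (integrable_const _)
          _ = (∫ ω, ‖g ω - gbar‖ ^ 2 ∂μ) - 2 * I * I + I ^ 2 := by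
              rw [integral_sub hF2int (hFint.const_mul _), integral_const_mul,
                integral_const]
              simp [hI]
      nlinarith [hnn, hexp]
    have hIle : I ≤ Real.sqrt M := by
      have h2 : I ^ 2 ≤ M := le_trans hsq hgvar
      calc I = Real.sqrt (I ^ 2) := by rw [Real.sqrt_sq hInn]
        _ ≤ Real.sqrt M := Real.sqrt_le_sqrt h2
    calc (∫ ω, ‖(β • T (g ω) + v) - (β • T gbar + v)‖ ∂μ)
        ≤ ∫ ω, β * ζ⁻¹ * ‖g ω - gbar‖ ∂μ := by
          apply integral_mono_of_nonneg
          · exact Filter.Eventually.of_forall fun ω => norm_nonneg _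
          · exact (hFint.const_mul _)
          · exact Filter.Eventually.of_forall hptwise
      _ = β * ζ⁻¹ * I := by rw [integral_const_mul]
      _ ≤ β * ζ⁻¹ * Real.sqrt M := by
          apply mul_le_mul_of_nonneg_left hIle
          positivity
end

section
/- Let J be a real m×n matrix and H a symmetric real n×n matrix with uᵀHu ≥ ζ‖u‖² for all u ∈ Null(J), where ζ > 0, and let v ∈ ℝⁿ. For w ∈ ℝⁿ let T(w) denote the unique vector in Null(J) with H·T(w) + w + Hv ∈ Range(Jᵀ). Let (Ω, 𝓕, ℙ) be a probability space, ḡ ∈ ℝⁿ, and let g be a square-integrable ℝⁿ-valued random vector with 𝔼[g] = ḡ and 𝔼[‖g − ḡ‖²] ≤ M for some M > 0. Set u := T(g) and u_true := T(ḡ). Then 𝔼[‖u‖²] ≤ ζ⁻²·M + ζ⁻¹·(u_true)ᵀH·u_true. -/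
open MeasureTheory
open scoped RealInnerProductSpace

/-- Lemma 3.6 of the paper: upper bound on the expectation of the squared norm of the
stochastic tangential step. -/
theorem stmt5 {m n : ℕ}
    (J : EuclideanSpace ℝ (Fin n) →L[ℝ] EuclideanSpace ℝ (Fin m))
    (H : EuclideanSpace ℝ (Fin n) →L[ℝ] EuclideanSpace ℝ (Fin n))
    (ζ : ℝ) (hζ : 0 < ζ) (hHsym : IsSelfAdjoint H)
    (hHpd : ∀ u ∈ LinearMap.ker (J : EuclideanSpace ℝ (Fin n) →ₗ[ℝ] EuclideanSpace ℝ (Fin m)), ζ * ‖u‖ ^ 2 ≤ ⟪H u, u⟫)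
    (v : EuclideanSpace ℝ (Fin n))
    (T : EuclideanSpace ℝ (Fin n) → EuclideanSpace ℝ (Fin n))
    (hT : ∀ w, T w ∈ LinearMap.ker (J : EuclideanSpace ℝ (Fin n) →ₗ[ℝ] EuclideanSpace ℝ (Fin m)) ∧
      H (T w) + w + H v ∈ LinearMap.range (J.adjoint : EuclideanSpace ℝ (Fin m) →ₗ[ℝ] EuclideanSpace ℝ (Fin n)))
    (hTunique : ∀ w t, t ∈ LinearMap.ker (J : EuclideanSpace ℝ (Fin n) →ₗ[ℝ] EuclideanSpace ℝ (Fin m)) →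
      H t + w + H v ∈ LinearMap.range (J.adjoint : EuclideanSpace ℝ (Fin m) →ₗ[ℝ] EuclideanSpace ℝ (Fin n)) → t = T w)
    {Ω : Type*} [MeasurableSpace Ω] (μ : Measure Ω) [IsProbabilityMeasure μ]
    (gbar : EuclideanSpace ℝ (Fin n)) (g : Ω → EuclideanSpace ℝ (Fin n))
    (hgL2 : MemLp g 2 μ) (hgmean : ∫ ω, g ω ∂μ = gbar)
    (M : ℝ) (hM : 0 < M) (hgvar : ∫ ω, ‖g ω - gbar‖ ^ 2 ∂μ ≤ M) :
    (∫ ω, ‖T (g ω)‖ ^ 2 ∂μ) ≤ ζ⁻¹ ^ 2 * M + ζ⁻¹ * ⟪H (T gbar), T gbar⟫ := by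
  -- orthogonality of range J.adjoint and ker J
  have horth : ∀ x ∈ LinearMap.range (J.adjoint : EuclideanSpace ℝ (Fin m) →ₗ[ℝ] EuclideanSpace ℝ (Fin n)), ∀ t ∈ LinearMap.ker (J : EuclideanSpace ℝ (Fin n) →ₗ[ℝ] EuclideanSpace ℝ (Fin m)), ⟪x, t⟫ = 0 := by
    rintro x ⟨y, rfl⟩ t ht
    rw [ContinuousLinearMap.coe_coe, ContinuousLinearMap.adjoint_inner_left]
    simp [show J t = 0 from LinearMap.mem_ker.mp ht]
  -- the map D w := T w - T 0 is linear
  have hadd : ∀ w₁ w₂, T (w₁ + w₂) = T w₁ + T w₂ - T 0 := by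
    intro w₁ w₂
    refine (hTunique _ _ (sub_mem (add_mem (hT w₁).1 (hT w₂).1) (hT 0).1) ?_).symm
    have : H (T w₁ + T w₂ - T 0) + (w₁ + w₂) + H v
        = (H (T w₁) + w₁ + H v) + (H (T w₂) + w₂ + H v) - (H (T 0) + 0 + H v) := by
      rw [map_sub, map_add]; abel
    rw [this]
    exact sub_mem (add_mem (hT w₁).2 (hT w₂).2) (hT 0).2
  have hsmul : ∀ (c : ℝ) w, T (c • w) = c • T w + (1 - c) • T 0 := by
    intro c w
    refine (hTunique _ _ (add_mem (Submodule.smul_mem _ _ (hT w).1)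
      (Submodule.smul_mem _ _ (hT 0).1)) ?_).symm
    have : H (c • T w + (1 - c) • T 0) + c • w + H v
        = c • (H (T w) + w + H v) + (1 - c) • (H (T 0) + 0 + H v) := by
      simp only [map_add, ContinuousLinearMap.map_smul]; module
    rw [this]
    exact add_mem (Submodule.smul_mem _ _ (hT w).2) (Submodule.smul_mem _ _ (hT 0).2)
  set Dlin : EuclideanSpace ℝ (Fin n) →ₗ[ℝ] EuclideanSpace ℝ (Fin n) :=
    { toFun := fun w => T w - T 0
      map_add' := by intro w₁ w₂; show T (w₁ + w₂) - T 0 = (T w₁ - T 0) + (T w₂ - T 0)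
                     rw [hadd]; abel
      map_smul' := by intro c w; show T (c • w) - T 0 = c • (T w - T 0)
                      rw [hsmul]; module } with hDlin
  set L : EuclideanSpace ℝ (Fin n) →L[ℝ] EuclideanSpace ℝ (Fin n) :=
    Dlin.toContinuousLinearMap with hL
  have hLdef : ∀ w, L w = T w - T 0 := fun w => rfl
  have hTL : ∀ w, T w - T gbar = L (w - gbar) := by
    intro w
    rw [map_sub, hLdef, hLdef]; abel
  set φ : Ω → EuclideanSpace ℝ (Fin n) := fun ω => g ω - gbar with hφdef
  set d : Ω → EuclideanSpace ℝ (Fin n) := fun ω => L (φ ω) with hddef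
  -- pointwise bound
  have hpt : ∀ w, ‖T w - T gbar‖ ^ 2 ≤ ζ⁻¹ ^ 2 * ‖w - gbar‖ ^ 2 := by
    intro w
    set e := T w - T gbar with he
    have heker : e ∈ LinearMap.ker (J : EuclideanSpace ℝ (Fin n) →ₗ[ℝ] EuclideanSpace ℝ (Fin m)) := sub_mem (hT w).1 (hT gbar).1
    have hrange : H e + (w - gbar) ∈ LinearMap.range (J.adjoint : EuclideanSpace ℝ (Fin m) →ₗ[ℝ] EuclideanSpace ℝ (Fin n)) := by
      have : H e + (w - gbar) = (H (T w) + w + H v) - (H (T gbar) + gbar + H v) := by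
        rw [he, map_sub]; abel
      rw [this]
      exact sub_mem (hT w).2 (hT gbar).2
    have h0 : ⟪H e + (w - gbar), e⟫ = 0 := horth _ hrange _ heker
    have hkey : ζ * ‖e‖ ^ 2 ≤ ‖w - gbar‖ * ‖e‖ := by
      calc ζ * ‖e‖ ^ 2 ≤ ⟪H e, e⟫ := hHpd e heker
        _ = -⟪w - gbar, e⟫ := by
            rw [inner_add_left] at h0; linarith
        _ ≤ ‖w - gbar‖ * ‖e‖ := by
            calc -⟪w - gbar, e⟫ ≤ |⟪w - gbar, e⟫| := neg_le_abs _
              _ ≤ ‖w - gbar‖ * ‖e‖ := abs_real_inner_le_norm _ _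
    have hnorm : ‖e‖ ≤ ζ⁻¹ * ‖w - gbar‖ := by
      rcases eq_or_lt_of_le (norm_nonneg e) with h | h
      · rw [← h]; positivity
      · have h2 : ζ * ‖e‖ ≤ ‖w - gbar‖ := by nlinarith
        calc ‖e‖ = ζ⁻¹ * (ζ * ‖e‖) := by field_simp
          _ ≤ ζ⁻¹ * ‖w - gbar‖ :=
            mul_le_mul_of_nonneg_left h2 (le_of_lt (inv_pos.mpr hζ))
    calc ‖e‖ ^ 2 ≤ (ζ⁻¹ * ‖w - gbar‖) ^ 2 := by
          have h3 : (0:ℝ) ≤ ζ⁻¹ * ‖w - gbar‖ := by positivity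
          nlinarith [norm_nonneg e]
      _ = ζ⁻¹ ^ 2 * ‖w - gbar‖ ^ 2 := by ring
  -- integrability
  have hφL2 : MemLp φ 2 μ := hgL2.sub (memLp_const gbar)
  have hdL2 : MemLp d 2 μ := L.comp_memLp' hφL2
  have hdInt : Integrable d μ := hdL2.integrable one_le_two
  have hφsqInt : Integrable (fun ω => ‖φ ω‖ ^ 2) μ := hφL2.norm.integrable_sq
  have hdsqInt : Integrable (fun ω => ‖d ω‖ ^ 2) μ := hdL2.norm.integrable_sq
  have hinnerInt : Integrable (fun ω => ⟪T gbar, d ω⟫) μ := hdInt.const_inner _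
  -- mean of d is zero
  have hφmean : ∫ ω, φ ω ∂μ = 0 := by
    have hgInt : Integrable g μ := hgL2.integrable one_le_two
    have : ∫ ω, φ ω ∂μ = (∫ ω, g ω ∂μ) - ∫ _ω, gbar ∂μ :=
      integral_sub hgInt (integrable_const gbar)
    rw [this, hgmean, integral_const]
    simp
  have hdmean : ∫ ω, d ω ∂μ = 0 := by
    have hcomm : (∫ ω, d ω ∂μ) = L (∫ ω, φ ω ∂μ) :=
      L.integral_comp_comm (hφL2.integrable one_le_two)
    rw [hcomm, hφmean, map_zero]
  -- expand the square
  have hexp : ∀ ω, ‖T (g ω)‖ ^ 2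
      = ‖T gbar‖ ^ 2 + 2 * ⟪T gbar, d ω⟫ + ‖d ω‖ ^ 2 := by
    intro ω
    have h4 : T (g ω) = T gbar + d ω := by
      show T (g ω) = T gbar + L (g ω - gbar)
      rw [← hTL (g ω)]; abel
    rw [h4, norm_add_sq_real]
  have hInt : (∫ ω, ‖T (g ω)‖ ^ 2 ∂μ)
      = ‖T gbar‖ ^ 2 + ∫ ω, ‖d ω‖ ^ 2 ∂μ := by
    calc (∫ ω, ‖T (g ω)‖ ^ 2 ∂μ)
        = ∫ ω, (‖T gbar‖ ^ 2 + 2 * ⟪T gbar, d ω⟫ + ‖d ω‖ ^ 2) ∂μ :=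
          integral_congr_ae (Filter.Eventually.of_forall hexp)
      _ = (∫ _ω, ‖T gbar‖ ^ 2 ∂μ) + (∫ ω, 2 * ⟪T gbar, d ω⟫ ∂μ)
          + ∫ ω, ‖d ω‖ ^ 2 ∂μ := by
          have hsum1 : Integrable (fun ω => ‖T gbar‖ ^ 2 + 2 * ⟪T gbar, d ω⟫) μ :=
            (integrable_const _).add (hinnerInt.const_mul 2)
          rw [integral_add hsum1 hdsqInt,
            integral_add (integrable_const _) (hinnerInt.const_mul 2)]
      _ = ‖T gbar‖ ^ 2 + ∫ ω, ‖d ω‖ ^ 2 ∂μ := by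
          rw [integral_const, integral_const_mul, integral_inner hdInt, hdmean]
          simp
  have hdbound : (∫ ω, ‖d ω‖ ^ 2 ∂μ) ≤ ζ⁻¹ ^ 2 * M := by
    calc (∫ ω, ‖d ω‖ ^ 2 ∂μ) ≤ ∫ ω, ζ⁻¹ ^ 2 * ‖φ ω‖ ^ 2 ∂μ := by
          refine integral_mono hdsqInt (hφsqInt.const_mul _) (fun ω => ?_)
          have h5 := hpt (g ω)
          rw [hTL (g ω)] at h5
          exact h5
      _ = ζ⁻¹ ^ 2 * ∫ ω, ‖φ ω‖ ^ 2 ∂μ := integral_const_mul _ _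
      _ ≤ ζ⁻¹ ^ 2 * M := by
          have h6 : (0:ℝ) ≤ ζ⁻¹ ^ 2 := by positivity
          exact mul_le_mul_of_nonneg_left hgvar h6
  have hubar : ‖T gbar‖ ^ 2 ≤ ζ⁻¹ * ⟪H (T gbar), T gbar⟫ := by
    have h1 := hHpd (T gbar) (hT gbar).1
    rw [inv_mul_eq_div, le_div_iff₀ hζ]
    linarith
  rw [hInt]
  linarith
end

section
/- Let J be a real m×n matrix, c ∈ ℝᵐ, ω > 0, ζ > 0, κ_H > 0. Let H be a symmetric real n×n matrix with ‖H‖ ≤ κ_H and uᵀHu ≥ ζ‖u‖² for all u ∈ Null(J). Let g, v ∈ ℝⁿ with ‖v‖ ≤ ω‖Jᵀc‖. Let u_true ∈ Null(J) be such that g + Hv + H·u_true ∈ Range(Jᵀ), and let y_true be the unique element of Range(J) ⊆ ℝᵐ satisfying Jᵀ·y_true = −(g + Hv + H·u_true). Then (u_true)ᵀH·u_true ≥ (ζ/(2κ_H²))·‖g + Jᵀy_true‖² − κ₀·‖Jᵀc‖², where κ₀ := ω²·(2κ_H + 2ζ⁻¹κ_H² + ζ). -/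
open scoped RealInnerProductSpace

set_option maxHeartbeats 1000000

/-- Lemma 3.7 of the paper: lower bound on the curvature term `(u_true)ᵀ H u_true`
in terms of the gradient of the Lagrangian and the infeasibility measure. -/
theorem stmt6 {m n : ℕ}
    (J : EuclideanSpace ℝ (Fin n) →L[ℝ] EuclideanSpace ℝ (Fin m))
    (c : EuclideanSpace ℝ (Fin m))
    (ω ζ κH : ℝ) (hω : 0 < ω) (hζ : 0 < ζ) (hκH : 0 < κH)
    (H : EuclideanSpace ℝ (Fin n) →L[ℝ] EuclideanSpace ℝ (Fin n))
    (hHsym : IsSelfAdjoint H) (hHnorm : ‖H‖ ≤ κH)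
    (hHpd : ∀ u ∈ LinearMap.ker (J : EuclideanSpace ℝ (Fin n) →ₗ[ℝ] EuclideanSpace ℝ (Fin m)), ζ * ‖u‖ ^ 2 ≤ ⟪H u, u⟫)
    (g v : EuclideanSpace ℝ (Fin n)) (hv : ‖v‖ ≤ ω * ‖J.adjoint c‖)
    (utrue : EuclideanSpace ℝ (Fin n)) (hutrueKer : utrue ∈ LinearMap.ker (J : EuclideanSpace ℝ (Fin n) →ₗ[ℝ] EuclideanSpace ℝ (Fin m)))
    (hutrueRange : g + H v + H utrue ∈ LinearMap.range (J.adjoint : EuclideanSpace ℝ (Fin m) →ₗ[ℝ] EuclideanSpace ℝ (Fin n)))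
    (ytrue : EuclideanSpace ℝ (Fin m)) (hytrueRange : ytrue ∈ LinearMap.range (J : EuclideanSpace ℝ (Fin n) →ₗ[ℝ] EuclideanSpace ℝ (Fin m)))
    (hytrueEq : J.adjoint ytrue = -(g + H v + H utrue))
    (κ₀ : ℝ) (hκ₀ : κ₀ = ω ^ 2 * (2 * κH + 2 * ζ⁻¹ * κH ^ 2 + ζ)) :
    ⟪H utrue, utrue⟫ ≥ ζ / (2 * κH ^ 2) * ‖g + J.adjoint ytrue‖ ^ 2
      - κ₀ * ‖J.adjoint c‖ ^ 2 := by
  have hr : g + J.adjoint ytrue = -(H (v + utrue)) := by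
    rw [hytrueEq, map_add]; abel
  have h1 : ‖g + J.adjoint ytrue‖ ≤ κH * (‖v‖ + ‖utrue‖) := by
    rw [hr, norm_neg]
    calc ‖H (v + utrue)‖ ≤ ‖H‖ * ‖v + utrue‖ := H.le_opNorm _
    _ ≤ κH * (‖v‖ + ‖utrue‖) :=
      mul_le_mul hHnorm (norm_add_le _ _) (norm_nonneg _) hκH.le
  have h2 : ‖g + J.adjoint ytrue‖ ^ 2 ≤ 2 * κH ^ 2 * (‖v‖ ^ 2 + ‖utrue‖ ^ 2) := by
    nlinarith [norm_nonneg (g + J.adjoint ytrue), sq_nonneg (‖v‖ - ‖utrue‖),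
      norm_nonneg v, norm_nonneg utrue]
  have h3 : ζ * ‖utrue‖ ^ 2 ≤ ⟪H utrue, utrue⟫ := hHpd utrue hutrueKer
  have hv2 : ‖v‖ ^ 2 ≤ ω ^ 2 * ‖J.adjoint c‖ ^ 2 := by
    nlinarith [norm_nonneg v, norm_nonneg (J.adjoint c)]
  have hdiv : ζ / (2 * κH ^ 2) * ‖g + J.adjoint ytrue‖ ^ 2
      ≤ ζ * ‖v‖ ^ 2 + ζ * ‖utrue‖ ^ 2 := by
    rw [div_mul_eq_mul_div, div_le_iff₀ (by positivity)]
    nlinarith [h2, hζ]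
  have e1 : ζ * ‖v‖ ^ 2 ≤ ζ * (ω ^ 2 * ‖J.adjoint c‖ ^ 2) :=
    mul_le_mul_of_nonneg_left hv2 hζ.le
  have e2 : ζ * (ω ^ 2 * ‖J.adjoint c‖ ^ 2) ≤ κ₀ * ‖J.adjoint c‖ ^ 2 := by
    have hnn : 0 ≤ ω ^ 2 * (2 * κH + 2 * ζ⁻¹ * κH ^ 2) * ‖J.adjoint c‖ ^ 2 := by
      have : (0:ℝ) < ζ⁻¹ := inv_pos.mpr hζ
      positivity
    rw [hκ₀]; ring_nf; ring_nf at hnn; linarith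
  linarith [hdiv, h3, e1, e2]
end

section
/- Let f : ℝⁿ → ℝ be differentiable with L-Lipschitz gradient (L > 0), and let c : ℝⁿ → ℝᵐ be differentiable with Jacobian map x ↦ J(x) ∈ ℝ^{m×n} that is Γ-Lipschitz with respect to the spectral norm (Γ > 0). Define the merit function φ(x, τ) := τ·f(x) + ‖c(x)‖ and the model reduction Δl(x, τ, g, d) := −τ·gᵀd + ‖c(x)‖ − ‖c(x) + J(x)d‖. Fix τ > 0, x ∈ ℝⁿ, β > 0 and α ∈ [0, 1]. Let v ∈ Range(J(x)ᵀ) and u, u_true ∈ Null(J(x)), and set d := βu + v and d_true := βu_true + v. Then φ(x + αd, τ) − φ(x, τ) ≤ −α·Δl(x, τ, ∇f(x), d_true) + (α²β²/2)·(τL + Γ)·‖u‖² + (α²/2)·(τL + Γ)·‖v‖² + α·τ·∇f(x)ᵀ(d − d_true). -/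
open scoped RealInnerProductSpace

/-- Quadratic error bound for a function with Lipschitz derivative. -/
lemma quad_bound {E F : Type*} [NormedAddCommGroup E] [NormedSpace ℝ E]
    [NormedAddCommGroup F] [NormedSpace ℝ F]
    (f : E → F) (hf : Differentiable ℝ f) (K : ℝ)
    (hLip : ∀ a b, ‖fderiv ℝ f a - fderiv ℝ f b‖ ≤ K * ‖a - b‖)
    (x h : E) : ‖f (x + h) - f x - fderiv ℝ f x h‖ ≤ K / 2 * ‖h‖ ^ 2 := by
  set g : ℝ → F := fun t => f (x + t • h) - t • fderiv ℝ f x h - f x with hg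
  have hline : ∀ t : ℝ, HasDerivAt (fun s : ℝ => x + s • h) h t := by
    intro t
    simpa using ((hasDerivAt_id t).smul_const h).const_add x
  have hg' : ∀ t : ℝ, HasDerivAt g (fderiv ℝ f (x + t • h) h - fderiv ℝ f x h) t := by
    intro t
    have h1 : HasDerivAt (fun s : ℝ => f (x + s • h)) (fderiv ℝ f (x + t • h) h) t :=
      (hf (x + t • h)).hasFDerivAt.comp_hasDerivAt t (hline t)
    have h2 : HasDerivAt (fun s : ℝ => s • fderiv ℝ f x h) (fderiv ℝ f x h) t := by
      simpa using (hasDerivAt_id t).smul_const (fderiv ℝ f x h)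
    exact (h1.sub h2).sub_const (f x)
  have hB : ∀ t : ℝ, HasDerivAt (fun s : ℝ => K / 2 * ‖h‖ ^ 2 * s ^ 2) (K * ‖h‖ ^ 2 * t) t := by
    intro t
    have := (hasDerivAt_pow 2 t).const_mul (K / 2 * ‖h‖ ^ 2)
    convert this using 1
    · rfl
    · rfl
    · rw [show (2:ℕ) - 1 = 1 from rfl]; push_cast; ring
  have bound : ∀ t ∈ Set.Ico (0 : ℝ) 1,
      ‖fderiv ℝ f (x + t • h) h - fderiv ℝ f x h‖ ≤ K * ‖h‖ ^ 2 * t := by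
    intro t ht
    have h1 : ‖fderiv ℝ f (x + t • h) h - fderiv ℝ f x h‖
        ≤ ‖fderiv ℝ f (x + t • h) - fderiv ℝ f x‖ * ‖h‖ := by
      have := (fderiv ℝ f (x + t • h) - fderiv ℝ f x).le_opNorm h
      simpa using this
    have h2 : ‖fderiv ℝ f (x + t • h) - fderiv ℝ f x‖ ≤ K * (t * ‖h‖) := by
      have := hLip (x + t • h) x
      simpa [norm_smul, abs_of_nonneg ht.1] using this
    calc ‖fderiv ℝ f (x + t • h) h - fderiv ℝ f x h‖
        ≤ ‖fderiv ℝ f (x + t • h) - fderiv ℝ f x‖ * ‖h‖ := h1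
      _ ≤ K * (t * ‖h‖) * ‖h‖ := by
          apply mul_le_mul_of_nonneg_right h2 (norm_nonneg h)
      _ = K * ‖h‖ ^ 2 * t := by ring
  have key : ∀ ⦃t⦄, t ∈ Set.Icc (0 : ℝ) 1 → ‖g t‖ ≤ K / 2 * ‖h‖ ^ 2 * t ^ 2 := by
    apply image_norm_le_of_norm_deriv_right_le_deriv_boundary
      (f' := fun t => fderiv ℝ f (x + t • h) h - fderiv ℝ f x h)
      (fun t _ => (hg' t).continuousAt.continuousWithinAt)
      (fun t _ => (hg' t).hasDerivWithinAt)
      (by simp [hg]) hB bound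
  have := key (Set.mem_Icc.mpr ⟨zero_le_one, le_refl 1⟩)
  have e : g 1 = f (x + h) - f x - fderiv ℝ f x h := by
    simp [hg, sub_sub]
    abel
  rw [e] at this
  simpa using this
set_option maxHeartbeats 1600000 in
/-- Lemma 3.8 of the paper (generic merit-function descent lemma). -/
theorem stmt7 {m n : ℕ}
    (f : EuclideanSpace ℝ (Fin n) → ℝ) (hf : Differentiable ℝ f)
    (L : ℝ) (hL : 0 < L)
    (hgradLip : ∀ x y, ‖gradient f x - gradient f y‖ ≤ L * ‖x - y‖)
    (c : EuclideanSpace ℝ (Fin n) → EuclideanSpace ℝ (Fin m))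
    (hc : Differentiable ℝ c)
    (Γ : ℝ) (hΓ : 0 < Γ)
    (hJLip : ∀ x y, ‖fderiv ℝ c x - fderiv ℝ c y‖ ≤ Γ * ‖x - y‖)
    (τ : ℝ) (hτ : 0 < τ) (x : EuclideanSpace ℝ (Fin n))
    (β : ℝ) (hβ : 0 < β) (α : ℝ) (hα : α ∈ Set.Icc (0 : ℝ) 1)
    (v : EuclideanSpace ℝ (Fin n)) (hv : v ∈ LinearMap.range ((fderiv ℝ c x).adjoint : EuclideanSpace ℝ (Fin m) →ₗ[ℝ] EuclideanSpace ℝ (Fin n)))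
    (u utrue : EuclideanSpace ℝ (Fin n))
    (hu : u ∈ LinearMap.ker (fderiv ℝ c x : EuclideanSpace ℝ (Fin n) →ₗ[ℝ] EuclideanSpace ℝ (Fin m)))
    (hutrue : utrue ∈ LinearMap.ker (fderiv ℝ c x : EuclideanSpace ℝ (Fin n) →ₗ[ℝ] EuclideanSpace ℝ (Fin m)))
    (d dtrue : EuclideanSpace ℝ (Fin n))
    (hd : d = β • u + v) (hdtrue : dtrue = β • utrue + v) :
    (τ * f (x + α • d) + ‖c (x + α • d)‖) - (τ * f x + ‖c x‖) ≤
      -(α * (-(τ * ⟪gradient f x, dtrue⟫) + ‖c x‖ - ‖c x + fderiv ℝ c x dtrue‖))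
      + α ^ 2 * β ^ 2 / 2 * (τ * L + Γ) * ‖u‖ ^ 2
      + α ^ 2 / 2 * (τ * L + Γ) * ‖v‖ ^ 2
      + α * τ * ⟪gradient f x, d - dtrue⟫ := by
  obtain ⟨hα0, hα1⟩ := hα
  -- inner product with gradient equals fderiv application
  have hginner : ∀ w, ⟪gradient f x, w⟫ = fderiv ℝ f x w := fun w =>
    InnerProductSpace.toDual_symm_apply
  -- fderiv of f is Lipschitz
  have hfd : ∀ a b, ‖fderiv ℝ f a - fderiv ℝ f b‖ ≤ L * ‖a - b‖ := by
    intro a b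
    have he : gradient f a - gradient f b =
        (InnerProductSpace.toDual ℝ (EuclideanSpace ℝ (Fin n))).symm
          (fderiv ℝ f a - fderiv ℝ f b) := by
      simp [gradient, map_sub]
    have := hgradLip a b
    rwa [he, LinearIsometryEquiv.norm_map] at this
  have hJu : fderiv ℝ c x u = 0 := hu
  have hJut : fderiv ℝ c x utrue = 0 := hutrue
  have hJdd : fderiv ℝ c x d = fderiv ℝ c x dtrue := by
    rw [hd, hdtrue]; simp [map_add, map_smul, hJu, hJut]
  -- orthogonality of u and v
  obtain ⟨z, hz⟩ := hv
  have huv : ⟪u, v⟫ = 0 := by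
    rw [← hz, ContinuousLinearMap.coe_coe, ContinuousLinearMap.adjoint_inner_right, hJu, inner_zero_left]
  -- norm decomposition
  set A : ℝ := α ^ 2 * β ^ 2 * ‖u‖ ^ 2 + α ^ 2 * ‖v‖ ^ 2 with hA
  have hnorm : ‖α • d‖ ^ 2 = A := by
    rw [hd, norm_smul, mul_pow, norm_add_sq_real, norm_smul,
      real_inner_smul_left, huv]
    simp [abs_of_nonneg hα0, abs_of_nonneg hβ.le, mul_pow]
    ring
  -- quadratic bound for f
  have hfq := quad_bound f hf L hfd x (α • d)
  have hf1 : f (x + α • d) - f x ≤ α * ⟪gradient f x, d⟫ + L / 2 * A := by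
    have h1 : f (x + α • d) - f x - fderiv ℝ f x (α • d) ≤ L / 2 * ‖α • d‖ ^ 2 :=
      le_of_abs_le (by simpa [Real.norm_eq_abs] using hfq)
    have h2 : fderiv ℝ f x (α • d) = α * ⟪gradient f x, d⟫ := by
      rw [map_smul, hginner]; simp
    rw [hnorm] at h1
    linarith [h1, h2.ge, h2.le]
  -- quadratic bound for c
  have hcq := quad_bound c hc Γ hJLip x (α • d)
  have hc1 : ‖c (x + α • d)‖ ≤ ‖c x + α • fderiv ℝ c x dtrue‖ + Γ / 2 * A := by
    have he : c x + fderiv ℝ c x (α • d) = c x + α • fderiv ℝ c x dtrue := by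
      rw [map_smul, hJdd]
    calc ‖c (x + α • d)‖
        = ‖(c x + fderiv ℝ c x (α • d)) + (c (x + α • d) - c x - fderiv ℝ c x (α • d))‖ := by
          congr 1; abel
      _ ≤ ‖c x + fderiv ℝ c x (α • d)‖ + ‖c (x + α • d) - c x - fderiv ℝ c x (α • d)‖ :=
          norm_add_le _ _
      _ ≤ ‖c x + α • fderiv ℝ c x dtrue‖ + Γ / 2 * A := by
          rw [he, hnorm] at *; linarith [hcq]
  -- convexity bound
  have hc2 : ‖c x + α • fderiv ℝ c x dtrue‖ ≤
      (1 - α) * ‖c x‖ + α * ‖c x + fderiv ℝ c x dtrue‖ := by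
    have he : c x + α • fderiv ℝ c x dtrue =
        (1 - α) • c x + α • (c x + fderiv ℝ c x dtrue) := by
      module
    rw [he]
    calc ‖(1 - α) • c x + α • (c x + fderiv ℝ c x dtrue)‖
        ≤ ‖(1 - α) • c x‖ + ‖α • (c x + fderiv ℝ c x dtrue)‖ := norm_add_le _ _
      _ = (1 - α) * ‖c x‖ + α * ‖c x + fderiv ℝ c x dtrue‖ := by
          rw [norm_smul, norm_smul, Real.norm_eq_abs, Real.norm_eq_abs,
            abs_of_nonneg (by linarith), abs_of_nonneg hα0]
  rw [inner_sub_right]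
  have hτf := mul_le_mul_of_nonneg_left hf1 hτ.le
  nlinarith [hf1, hc1, hc2, hτf]
end

section
/- Let J be a real m×n matrix, c ∈ ℝᵐ with ‖c‖ > 0, and let constants ω > 0, ζ > 0, κ_H > 0, κ_g > 0, κ_J > 0, κ_c > 0, κ_v > 0, σ_J > 0, κ_β > 0 and σ ∈ (0, 1) be given, with ‖J‖ ≤ κ_J and ‖c‖ ≤ κ_c. Let H be a symmetric n×n matrix with ‖H‖ ≤ κ_H and uᵀHu ≥ ζ‖u‖² for all u ∈ Null(J). Let g ∈ ℝⁿ with ‖g‖ ≤ κ_g, let v ∈ Range(Jᵀ) with ‖v‖ ≤ ω‖Jᵀc‖ and ‖c‖·(‖c‖ − ‖c + Jv‖) ≥ κ_v·‖Jᵀc‖², and suppose ‖Jᵀc‖ ≥ σ_J·‖c‖. Let u_true ∈ Null(J) be such that H·u_true + g + Hv ∈ Range(Jᵀ), let β ∈ (0, κ_β], and set d_true := β·u_true + v. Then, with κ_u := ζ⁻¹·(κ_g + κ_H·ω·κ_J·κ_c) and τ_min := (1 − σ)·κ_v·σ_J/(ω·(κ_β·κ_H·κ_u + κ_g)), it holds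 that τ_min·(gᵀd_true + β·(u_true)ᵀH·u_true) ≤ (1 − σ)·(‖c‖ − ‖c + Jv‖). -/
open scoped RealInnerProductSpace

set_option maxHeartbeats 1000000 in
/-- Lemma 3.12 of the paper: under LICQ, the explicit merit parameter lower bound
`τ_min` satisfies the merit-parameter inequality. -/
theorem stmt13 {m n : ℕ}
    (J : EuclideanSpace ℝ (Fin n) →L[ℝ] EuclideanSpace ℝ (Fin m))
    (c : EuclideanSpace ℝ (Fin m)) (hc : 0 < ‖c‖)
    (ω ζ κH κg κJ κc κv σJ κβ σ : ℝ)
    (hω : 0 < ω) (hζ : 0 < ζ) (hκH : 0 < κH) (hκg : 0 < κg) (hκJ : 0 < κJ)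
    (hκc : 0 < κc) (hκv : 0 < κv) (hσJ : 0 < σJ) (hκβ : 0 < κβ)
    (hσ : σ ∈ Set.Ioo (0 : ℝ) 1)
    (hJbound : ‖J‖ ≤ κJ) (hcbound : ‖c‖ ≤ κc)
    (H : EuclideanSpace ℝ (Fin n) →L[ℝ] EuclideanSpace ℝ (Fin n))
    (hHsym : IsSelfAdjoint H) (hHnorm : ‖H‖ ≤ κH)
    (hHpd : ∀ u ∈ LinearMap.ker
      (J : EuclideanSpace ℝ (Fin n) →ₗ[ℝ] EuclideanSpace ℝ (Fin m)), ζ * ‖u‖ ^ 2 ≤ ⟪H u, u⟫)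
    (g : EuclideanSpace ℝ (Fin n)) (hg : ‖g‖ ≤ κg)
    (v : EuclideanSpace ℝ (Fin n)) (hvrange : v ∈ LinearMap.range
      (J.adjoint : EuclideanSpace ℝ (Fin m) →ₗ[ℝ] EuclideanSpace ℝ (Fin n)))
    (hvnorm : ‖v‖ ≤ ω * ‖J.adjoint c‖)
    (hvdec : ‖c‖ * (‖c‖ - ‖c + J v‖) ≥ κv * ‖J.adjoint c‖ ^ 2)
    (hlicq : ‖J.adjoint c‖ ≥ σJ * ‖c‖)
    (utrue : EuclideanSpace ℝ (Fin n)) (hutrueKer : utrue ∈ LinearMap.ker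
      (J : EuclideanSpace ℝ (Fin n) →ₗ[ℝ] EuclideanSpace ℝ (Fin m)))
    (hutrueRange : H utrue + g + H v ∈ LinearMap.range
      (J.adjoint : EuclideanSpace ℝ (Fin m) →ₗ[ℝ] EuclideanSpace ℝ (Fin n)))
    (β : ℝ) (hβ : β ∈ Set.Ioc 0 κβ)
    (dtrue : EuclideanSpace ℝ (Fin n)) (hdtrue : dtrue = β • utrue + v)
    (κu τmin : ℝ)
    (hκu : κu = ζ⁻¹ * (κg + κH * ω * κJ * κc))
    (hτmin : τmin = (1 - σ) * κv * σJ / (ω * (κβ * κH * κu + κg))) :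
    τmin * (⟪g, dtrue⟫ + β * ⟪H utrue, utrue⟫) ≤
      (1 - σ) * (‖c‖ - ‖c + J v‖) := by

  obtain ⟨hσ0, hσ1⟩ := hσ
  obtain ⟨hβ0, hβκ⟩ := hβ
  obtain ⟨y, hy⟩ := hutrueRange
  have hJu : J utrue = 0 := hutrueKer
  set A := ‖J.adjoint c‖ with hA
  have hA0 : 0 ≤ A := norm_nonneg _
  have hAle : A ≤ κJ * κc := by
    have h1 : ‖J.adjoint c‖ ≤ ‖J.adjoint‖ * ‖c‖ := (ContinuousLinearMap.adjoint J).le_opNorm c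
    have h2 : ‖ContinuousLinearMap.adjoint J‖ = ‖J‖ := by
      simp [ContinuousLinearMap.adjoint]
    have : ‖J.adjoint c‖ ≤ ‖J‖ * ‖c‖ := by rw [h2] at h1; exact h1
    calc A ≤ ‖J‖ * ‖c‖ := this
      _ ≤ κJ * κc := mul_le_mul hJbound hcbound hc.le (hκJ.le)
  have hvle : ‖v‖ ≤ ω * (κJ * κc) := le_trans hvnorm (by nlinarith)
  -- orthogonality
  have horth : ⟪H utrue, utrue⟫ + ⟪g, utrue⟫ + ⟪H v, utrue⟫ = 0 := by
    have : ⟪H utrue + g + H v, utrue⟫ = 0 := by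
      rw [← hy, ContinuousLinearMap.coe_coe, ContinuousLinearMap.adjoint_inner_left, hJu, inner_zero_right]
    rwa [inner_add_left, inner_add_left] at this
  have hHvle : ‖H v‖ ≤ κH * ‖v‖ :=
    le_trans (H.le_opNorm v) (mul_le_mul_of_nonneg_right hHnorm (norm_nonneg v))
  have hκu0 : 0 < κu := by
    rw [hκu]; positivity
  -- bound on ‖utrue‖
  have hnu : ‖utrue‖ ≤ κu := by
    have hq : ζ * ‖utrue‖ ^ 2 ≤ ⟪H utrue, utrue⟫ := hHpd utrue hutrueKer
    have h1 : -⟪g, utrue⟫ ≤ ‖g‖ * ‖utrue‖ := by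
      have := real_inner_le_norm (-g) utrue
      simpa using this
    have h2 : -⟪H v, utrue⟫ ≤ ‖H v‖ * ‖utrue‖ := by
      have := real_inner_le_norm (-(H v)) utrue
      simpa using this
    have hup : ζ * ‖utrue‖ ^ 2 ≤ (κg + κH * ω * κJ * κc) * ‖utrue‖ := by
      have hHvle2 : ‖H v‖ ≤ κH * (ω * (κJ * κc)) := le_trans hHvle
        (mul_le_mul_of_nonneg_left hvle hκH.le)
      nlinarith [norm_nonneg utrue, norm_nonneg v]
    rcases eq_or_lt_of_le (norm_nonneg utrue) with h | h
    · rw [← h]; exact hκu0.le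
    · have hζu : ζ * ‖utrue‖ ≤ κg + κH * ω * κJ * κc := by nlinarith
      rw [hκu, inv_mul_eq_div, le_div_iff₀ hζ]
      linarith
  -- main bound on the linear term
  have hLHS : ⟪g, dtrue⟫ + β * ⟪H utrue, utrue⟫ ≤ ω * (κβ * κH * κu + κg) * A := by
    have hexp : ⟪g, dtrue⟫ + β * ⟪H utrue, utrue⟫
        = β * (-⟪H v, utrue⟫) + ⟪g, v⟫ := by
      rw [hdtrue, inner_add_right, real_inner_smul_right]
      nlinarith [horth]
    have h2 : -⟪H v, utrue⟫ ≤ ‖H v‖ * ‖utrue‖ := by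
      have := real_inner_le_norm (-(H v)) utrue
      simpa using this
    have h3 : ⟪g, v⟫ ≤ ‖g‖ * ‖v‖ := real_inner_le_norm g v
    have s2 : ‖H v‖ * ‖utrue‖ ≤ (κH * ‖v‖) * κu :=
      mul_le_mul hHvle hnu (norm_nonneg _) (by positivity)
    have hM0 : 0 ≤ κH * ‖v‖ * κu := by positivity
    have s1 : β * (-⟪H v, utrue⟫) ≤ κβ * (κH * ‖v‖ * κu) :=
      le_trans (mul_le_mul_of_nonneg_left (le_trans h2 s2) hβ0.le)
        (mul_le_mul_of_nonneg_right hβκ hM0)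
    have s3 : ⟪g, v⟫ ≤ κg * ‖v‖ :=
      le_trans h3 (mul_le_mul_of_nonneg_right hg (norm_nonneg v))
    have s4 : (κβ * κH * κu + κg) * ‖v‖ ≤ (κβ * κH * κu + κg) * (ω * A) := by
      have hpos : 0 ≤ κβ * κH * κu + κg := by positivity
      exact mul_le_mul_of_nonneg_left hvnorm hpos
    linarith
  have hD : 0 < ω * (κβ * κH * κu + κg) := by positivity
  have hτ : 0 < τmin := by
    rw [hτmin]
    have : 0 < 1 - σ := by linarith
    positivity
  have hstep : τmin * (⟪g, dtrue⟫ + β * ⟪H utrue, utrue⟫)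
      ≤ (1 - σ) * κv * σJ * A := by
    have := mul_le_mul_of_nonneg_left hLHS hτ.le
    have heq : τmin * (ω * (κβ * κH * κu + κg) * A) = (1 - σ) * κv * σJ * A := by
      rw [hτmin]; field_simp
    linarith [this, heq.le, heq.ge]
  have hfin : κv * σJ * A ≤ ‖c‖ - ‖c + J v‖ := by
    have h1 : κv * A * (σJ * ‖c‖) ≤ κv * A * A :=
      mul_le_mul_of_nonneg_left hlicq (by positivity)
    have h2 : κv * σJ * A * ‖c‖ ≤ (‖c‖ - ‖c + J v‖) * ‖c‖ := by nlinarith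
    exact le_of_mul_le_mul_right h2 hc
  have h1σ : 0 < 1 - σ := by linarith
  calc τmin * (⟪g, dtrue⟫ + β * ⟪H utrue, utrue⟫)
      ≤ (1 - σ) * κv * σJ * A := hstep
    _ ≤ (1 - σ) * (‖c‖ - ‖c + J v‖) := by
        have := mul_le_mul_of_nonneg_left hfin h1σ.le
        linarith
end

section
/- Let J be a real m×n matrix and σ̄ > 0 a constant such that ‖Jw‖ ≥ σ̄·‖w‖ for all w ∈ Range(Jᵀ) (a uniform lower bound on the nonzero singular values of J). Let H be a symmetric n×n matrix with ‖H‖ ≤ κ_H and uᵀHu ≥ ζ‖u‖² for all u ∈ Null(J), where ζ, κ_H > 0. Let v, ḡ ∈ ℝⁿ and β, γ_r, γ_ρ > 0. Let (Ω, 𝓕, ℙ) be a probability space and g an integrable ℝⁿ-valued random vector with 𝔼[g] = ḡ. Suppose the random vectors u (ℝⁿ-valued, integrable), y (ℝᵐ-valued), ρ (ℝⁿ-valued) and r (ℝᵐ-valued) satisfy, almost surely, the inexact Newton system Hu + Jᵀy = −(g + Hv) + ρ and Ju = r, together with the termination test ‖r‖ ≤ γ_r·β and ‖ρ‖ ≤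 γ_ρ·β. Let u_true ∈ Null(J) be the unique vector with H·u_true + ḡ + Hv ∈ Range(Jᵀ). Then ‖𝔼[u − u_true]‖ ≤ κ₄·β, where κ₄ := (1 + ζ⁻¹·κ_H)·σ̄⁻¹·γ_r + ζ⁻¹·γ_ρ. -/
open MeasureTheory
open scoped RealInnerProductSpace

set_option maxHeartbeats 1000000

/-- Lemma 4.2 of the paper: bound on the norm of the expected deviation of the inexact
stochastic tangential step from the true tangential step, with explicit constant
`κ₄ = (1 + ζ⁻¹κ_H)·σ̄⁻¹·γ_r + ζ⁻¹·γ_ρ`. -/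
theorem stmt17 {m n : ℕ}
    (J : EuclideanSpace ℝ (Fin n) →L[ℝ] EuclideanSpace ℝ (Fin m))
    (σbar κH ζ : ℝ) (hσbar : 0 < σbar) (hκH : 0 < κH) (hζ : 0 < ζ)
    (hσlow : ∀ w ∈ LinearMap.range
        (J.adjoint : EuclideanSpace ℝ (Fin m) →ₗ[ℝ] EuclideanSpace ℝ (Fin n)), σbar * ‖w‖ ≤ ‖J w‖)
    (H : EuclideanSpace ℝ (Fin n) →L[ℝ] EuclideanSpace ℝ (Fin n))
    (hHsym : IsSelfAdjoint H) (hHnorm : ‖H‖ ≤ κH)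
    (hHpd : ∀ u ∈ LinearMap.ker
        (J : EuclideanSpace ℝ (Fin n) →ₗ[ℝ] EuclideanSpace ℝ (Fin m)), ζ * ‖u‖ ^ 2 ≤ ⟪H u, u⟫)
    (v gbar : EuclideanSpace ℝ (Fin n))
    (β γr γρ : ℝ) (hβ : 0 < β) (hγr : 0 < γr) (hγρ : 0 < γρ)
    {Ω : Type*} [MeasurableSpace Ω] (μ : Measure Ω) [IsProbabilityMeasure μ]
    (g : Ω → EuclideanSpace ℝ (Fin n)) (hgint : Integrable g μ)
    (hgmean : ∫ ω, g ω ∂μ = gbar)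
    (u : Ω → EuclideanSpace ℝ (Fin n)) (huint : Integrable u μ)
    (y : Ω → EuclideanSpace ℝ (Fin m))
    (ρ : Ω → EuclideanSpace ℝ (Fin n)) (r : Ω → EuclideanSpace ℝ (Fin m))
    (hsys : ∀ᵐ ω ∂μ,
      H (u ω) + J.adjoint (y ω) = -(g ω + H v) + ρ ω ∧
      J (u ω) = r ω ∧ ‖r ω‖ ≤ γr * β ∧ ‖ρ ω‖ ≤ γρ * β)
    (utrue : EuclideanSpace ℝ (Fin n)) (hutrueKer : utrue ∈ LinearMap.ker
        (J : EuclideanSpace ℝ (Fin n) →ₗ[ℝ] EuclideanSpace ℝ (Fin m)))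
    (hutrueRange : H utrue + gbar + H v ∈ LinearMap.range
        (J.adjoint : EuclideanSpace ℝ (Fin m) →ₗ[ℝ] EuclideanSpace ℝ (Fin n)))
    (hutrueUnique : ∀ t : EuclideanSpace ℝ (Fin n), t ∈ LinearMap.ker
        (J : EuclideanSpace ℝ (Fin n) →ₗ[ℝ] EuclideanSpace ℝ (Fin m)) →
      H t + gbar + H v ∈ LinearMap.range
        (J.adjoint : EuclideanSpace ℝ (Fin m) →ₗ[ℝ] EuclideanSpace ℝ (Fin n)) → t = utrue)
    (κ₄ : ℝ) (hκ₄ : κ₄ = (1 + ζ⁻¹ * κH) * σbar⁻¹ * γr + ζ⁻¹ * γρ) :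
    ‖∫ ω, (u ω - utrue) ∂μ‖ ≤ κ₄ * β := by
  classical
  set K : Submodule ℝ (EuclideanSpace ℝ (Fin n)) := LinearMap.ker (J : EuclideanSpace ℝ (Fin n) →ₗ[ℝ] EuclideanSpace ℝ (Fin m)) with hKdef
  -- Kᗮ = range Jᵀ
  have hKer : K = (LinearMap.range (J.adjoint : EuclideanSpace ℝ (Fin m) →ₗ[ℝ] EuclideanSpace ℝ (Fin n)))ᗮ := by
    ext x
    constructor
    · intro hx
      rw [Submodule.mem_orthogonal]
      rintro _ ⟨yy, rfl⟩
      rw [ContinuousLinearMap.coe_coe, ContinuousLinearMap.adjoint_inner_left]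
      have : J x = 0 := hx
      rw [this, inner_zero_right]
    · intro hx
      have := hx (J.adjoint (J x)) ⟨J x, rfl⟩
      rw [ContinuousLinearMap.adjoint_inner_left] at this
      have : J x = 0 := by rwa [inner_self_eq_zero] at this
      exact this
  have hKorth : Kᗮ = LinearMap.range (J.adjoint : EuclideanSpace ℝ (Fin m) →ₗ[ℝ] EuclideanSpace ℝ (Fin n)) := by
    rw [hKer, Submodule.orthogonal_orthogonal]
  -- the projection onto K
  set P : EuclideanSpace ℝ (Fin n) →L[ℝ] EuclideanSpace ℝ (Fin n) :=
    K.subtypeL.comp (Submodule.orthogonalProjectionOnto K) with hPdef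
  have hPapp : ∀ x, P x = (Submodule.orthogonalProjectionOnto K x : EuclideanSpace ℝ (Fin n)) := fun x => rfl
  have hPnorm : ∀ x, ‖P x‖ ≤ ‖x‖ := by
    intro x
    rw [hPapp]
    exact (Submodule.orthogonalProjectionOnto K).le_opNorm x |>.trans
      (by nlinarith [Submodule.orthogonalProjectionOnto_norm_le K, norm_nonneg x, norm_nonneg ((Submodule.orthogonalProjectionOnto K) x)])
  have hPzero : ∀ x ∈ Kᗮ, P x = 0 := by
    intro x hx
    rw [hPapp, Submodule.orthogonalProjectionOnto_apply_of_mem_orthogonal hx,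
      Submodule.coe_zero]
  have hPinner : ∀ x : EuclideanSpace ℝ (Fin n), ∀ t ∈ K, ⟪x, t⟫ = ⟪P x, t⟫ := by
    intro x t ht
    have h1 : x - P x ∈ Kᗮ := Submodule.sub_starProjection_mem_orthogonal (K := K) x
    have h2 : ⟪t, x - P x⟫ = 0 := (Submodule.mem_orthogonal K (x - P x)).mp h1 t ht
    have h3 : ⟪x - P x, t⟫ = 0 := by rw [real_inner_comm]; exact h2
    rw [inner_sub_left] at h3
    linarith
  -- the mean of u
  set ubar : EuclideanSpace ℝ (Fin n) := ∫ ω, u ω ∂μ with hubar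
  have hconst : ∀ c : EuclideanSpace ℝ (Fin n), ∫ _ : Ω, c ∂μ = c := by
    intro c; simp [measure_univ]
  have hintrw : ∫ ω, (u ω - utrue) ∂μ = ubar - utrue := by
    rw [integral_sub huint (integrable_const _), hconst]
  rw [hintrw]
  -- bound on J ubar
  have hJubar : ‖J ubar‖ ≤ γr * β := by
    have hJint : Integrable (fun ω => J (u ω)) μ := J.integrable_comp huint
    have h1 : J ubar = ∫ ω, J (u ω) ∂μ := (J.integral_comp_comm huint).symm
    rw [h1]
    have h2 : ∀ᵐ ω ∂μ, ‖J (u ω)‖ ≤ (fun _ => γr * β) ω := by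
      filter_upwards [hsys] with ω hω
      rw [hω.2.1]; exact hω.2.2.1
    calc ‖∫ ω, J (u ω) ∂μ‖ ≤ ∫ _ : Ω, γr * β ∂μ :=
          norm_integral_le_of_norm_le (integrable_const _) h2
      _ = γr * β := by simp [measure_univ]
  -- bound on the projected optimality residual
  have hfint : Integrable (fun ω => H (u ω) + g ω + H v) μ :=
    ((H.integrable_comp huint).add hgint).add (integrable_const _)
  have hPbound : ‖P (H ubar + gbar + H v)‖ ≤ γρ * β := by
    have hPfint : Integrable (fun ω => P (H (u ω) + g ω + H v)) μ := P.integrable_comp hfint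
    have h1 : ∫ ω, P (H (u ω) + g ω + H v) ∂μ = P (H ubar + gbar + H v) := by
      rw [P.integral_comp_comm hfint]
      congr 1
      rw [integral_add (f := fun ω => H (u ω) + g ω) (g := fun _ => H v)
          ((H.integrable_comp huint).add hgint) (integrable_const _),
        integral_add (f := fun ω => H (u ω)) (g := g)
          (H.integrable_comp huint) hgint, hconst, hgmean,
        H.integral_comp_comm huint]
    rw [← h1]
    have h2 : ∀ᵐ ω ∂μ, ‖P (H (u ω) + g ω + H v)‖ ≤ (fun _ => γρ * β) ω := by
      filter_upwards [hsys] with ω hω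
      have heq : H (u ω) + g ω + H v = ρ ω - J.adjoint (y ω) := by
        have := hω.1
        have h3 : H (u ω) + g ω + H v = (H (u ω) + J.adjoint (y ω)) + (g ω + H v)
            - J.adjoint (y ω) := by abel
        rw [h3, this]; abel
      have hmem : J.adjoint (y ω) ∈ Kᗮ := by rw [hKorth]; exact ⟨y ω, rfl⟩
      have h4 : P (H (u ω) + g ω + H v) = P (ρ ω) := by
        rw [heq, map_sub, hPzero _ hmem, sub_zero]
      rw [h4]
      exact (hPnorm (ρ ω)).trans hω.2.2.2
    calc ‖∫ ω, P (H (u ω) + g ω + H v) ∂μ‖ ≤ ∫ _ : Ω, γρ * β ∂μ :=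
          norm_integral_le_of_norm_le (integrable_const _) h2
      _ = γρ * β := by simp [measure_univ]
  -- decompose the error
  set e : EuclideanSpace ℝ (Fin n) := ubar - utrue with he
  set t : EuclideanSpace ℝ (Fin n) := P e with htdef
  set s : EuclideanSpace ℝ (Fin n) := e - t with hsdef
  have ht_mem : t ∈ K := by rw [htdef, hPapp]; exact (Submodule.orthogonalProjectionOnto K e).2
  have hs_mem : s ∈ Kᗮ := Submodule.sub_starProjection_mem_orthogonal (K := K) e
  -- normal component bound
  have hJt : J t = 0 := ht_mem
  have hJutrue : J utrue = 0 := hutrueKer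
  have hJs : J s = J ubar := by
    rw [hsdef, map_sub, hJt, sub_zero, he, map_sub, hJutrue, sub_zero]
  have hs_norm : ‖s‖ ≤ σbar⁻¹ * (γr * β) := by
    have h1 : σbar * ‖s‖ ≤ ‖J s‖ := hσlow s (by rw [← hKorth]; exact hs_mem)
    rw [hJs] at h1
    have h2 : σbar * ‖s‖ ≤ γr * β := h1.trans hJubar
    rw [inv_mul_eq_div, le_div_iff₀ hσbar]
    nlinarith [h2]
  -- tangential component bound
  have hPHe : ‖P (H e)‖ ≤ γρ * β := by
    have h1 : H e = (H ubar + gbar + H v) - (H utrue + gbar + H v) := by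
      rw [he, map_sub]; abel
    have h2 : H utrue + gbar + H v ∈ Kᗮ := by rw [hKorth]; exact hutrueRange
    rw [h1, map_sub, hPzero _ h2, sub_zero]
    exact hPbound
  have ht_norm : ‖t‖ ≤ ζ⁻¹ * (γρ * β + κH * ‖s‖) := by
    have h1 : ζ * ‖t‖ ^ 2 ≤ ⟪H t, t⟫ := hHpd t ht_mem
    have hes' : e = t + s := by rw [hsdef]; abel
    have h2 : H t = H e - H s := by rw [hes', map_add, add_sub_cancel_right]
    have h3 : ⟪H e, t⟫ = ⟪P (H e), t⟫ := hPinner (H e) t ht_mem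
    have h4 : ⟪P (H e), t⟫ ≤ ‖P (H e)‖ * ‖t‖ := real_inner_le_norm _ _
    have h5 : -⟪H s, t⟫ ≤ ‖H s‖ * ‖t‖ := by
      have := abs_real_inner_le_norm (H s) t
      have := neg_abs_le (⟪H s, t⟫)
      linarith [abs_real_inner_le_norm (H s) t, neg_abs_le (⟪H s, t⟫ : ℝ)]
    have h6 : ‖H s‖ ≤ κH * ‖s‖ := by
      calc ‖H s‖ ≤ ‖H‖ * ‖s‖ := H.le_opNorm s
        _ ≤ κH * ‖s‖ := by nlinarith [norm_nonneg s]
    have h7 : ζ * ‖t‖ ^ 2 ≤ (γρ * β + κH * ‖s‖) * ‖t‖ := by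
      have : (⟪H t, t⟫ : ℝ) = ⟪H e, t⟫ - ⟪H s, t⟫ := by rw [h2, inner_sub_left]
      nlinarith [norm_nonneg t, norm_nonneg (P (H e)), norm_nonneg (H s)]
    rcases eq_or_lt_of_le (norm_nonneg t) with h0 | h0
    · rw [← h0]
      have : 0 ≤ γρ * β + κH * ‖s‖ := by positivity
      positivity
    · have h8 : ζ * ‖t‖ ≤ γρ * β + κH * ‖s‖ := by nlinarith
      rw [inv_mul_eq_div, le_div_iff₀ hζ]
      linarith
  -- conclude
  have hes : e = t + s := by rw [hsdef]; abel
  have hfinal : ‖e‖ ≤ ‖t‖ + ‖s‖ := by rw [hes]; exact norm_add_le t s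
  have hκHs : κH * ‖s‖ ≤ κH * (σbar⁻¹ * (γr * β)) := by nlinarith
  have hζinv : (0:ℝ) < ζ⁻¹ := by positivity
  rw [hκ₄]
  have : ζ⁻¹ * (γρ * β + κH * ‖s‖) ≤ ζ⁻¹ * (γρ * β + κH * (σbar⁻¹ * (γr * β))) := by
    nlinarith
  nlinarith [hs_norm, ht_norm, hfinal, mul_pos hγr hβ, inv_pos.mpr hσbar]
end

section
/- Let J be a real m×n matrix and c ∈ ℝᵐ, with ‖J‖ ≤ κ_J and ‖c‖ ≤ κ_c, and let σ̄ > 0 satisfy ‖Jw‖ ≥ σ̄·‖w‖ for all w ∈ Range(Jᵀ). Let H be a symmetric n×n matrix with ‖H‖ ≤ κ_H and uᵀHu ≥ ζ‖u‖² for all u ∈ Null(J), where ζ, κ_H > 0. Let ḡ, v ∈ ℝⁿ with ‖ḡ‖ ≤ κ_g and ‖v‖ ≤ ω·‖Jᵀc‖, where ω > 0, and let 0 < β ≤ κ_β and γ_r, γ_ρ > 0. Let (Ω, 𝓕, ℙ) be a probability space and g a square-integrable ℝⁿ-valued random vector with 𝔼[g] = ḡ and 𝔼[‖g − ḡ‖²]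 ≤ M for some M > 0. Suppose the random vectors u, y, ρ, r satisfy, almost surely, Hu + Jᵀy = −(g + Hv) + ρ and Ju = r, with ‖r‖ ≤ γ_r·β and ‖ρ‖ ≤ γ_ρ·β. Then 𝔼[‖u‖²] ≤ 2·κ_u² + 2·(ζ⁻¹·√M + κ₄·κ_β)², where κ_u := ζ⁻¹·(κ_g + κ_H·ω·κ_J·κ_c) and κ₄ := (1 + ζ⁻¹·κ_H)·σ̄⁻¹·γ_r + ζ⁻¹·γ_ρ. -/
open MeasureTheory
open scoped RealInnerProductSpace

set_option maxHeartbeats 1000000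

lemma stmt18_ker_orth {m n : ℕ}
    (J : EuclideanSpace ℝ (Fin n) →L[ℝ] EuclideanSpace ℝ (Fin m)) :
    ((LinearMap.ker J.toLinearMap : Submodule ℝ (EuclideanSpace ℝ (Fin n)))ᗮ : Submodule ℝ _)
      ≤ LinearMap.range (J.adjoint).toLinearMap := by
  have h1 : (LinearMap.range (J.adjoint).toLinearMap : Submodule ℝ (EuclideanSpace ℝ (Fin n)))ᗮ
      = LinearMap.ker J.toLinearMap := by
    ext x
    constructor
    · intro hx
      have h := hx (J.adjoint (J x)) ⟨J x, rfl⟩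
      rw [ContinuousLinearMap.adjoint_inner_left] at h
      exact inner_self_eq_zero.mp h
    · intro hx w hw
      obtain ⟨y, rfl⟩ := hw
      have hx0 : J x = 0 := hx
      rw [ContinuousLinearMap.coe_coe, ContinuousLinearMap.adjoint_inner_left, hx0, inner_zero_right]
  rw [← h1, Submodule.orthogonal_orthogonal]

lemma stmt18_pointwise {m n : ℕ}
    (J : EuclideanSpace ℝ (Fin n) →L[ℝ] EuclideanSpace ℝ (Fin m))
    (c : EuclideanSpace ℝ (Fin m))
    (κJ κc σbar κH ζ : ℝ) (hκJ : 0 < κJ) (hκc : 0 < κc)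
    (hσbar : 0 < σbar) (hκH : 0 < κH) (hζ : 0 < ζ)
    (hJbound : ‖J‖ ≤ κJ) (hcbound : ‖c‖ ≤ κc)
    (hσlow : ∀ w ∈ LinearMap.range (J.adjoint).toLinearMap, σbar * ‖w‖ ≤ ‖J w‖)
    (H : EuclideanSpace ℝ (Fin n) →L[ℝ] EuclideanSpace ℝ (Fin n))
    (hHnorm : ‖H‖ ≤ κH)
    (hHpd : ∀ u ∈ LinearMap.ker J.toLinearMap, ζ * ‖u‖ ^ 2 ≤ ⟪H u, u⟫)
    (gω gbar v : EuclideanSpace ℝ (Fin n))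
    (κg ω : ℝ) (hκg : 0 < κg) (hω : 0 < ω)
    (hgbar : ‖gbar‖ ≤ κg) (hv : ‖v‖ ≤ ω * ‖J.adjoint c‖)
    (β γr γρ : ℝ) (hβ : 0 < β) (hγr : 0 < γr) (hγρ : 0 < γρ)
    (uu : EuclideanSpace ℝ (Fin n)) (yy rr : EuclideanSpace ℝ (Fin m))
    (ρρ : EuclideanSpace ℝ (Fin n))
    (h1 : H uu + J.adjoint yy = -(gω + H v) + ρρ)
    (h2 : J uu = rr) (hr : ‖rr‖ ≤ γr * β) (hρ : ‖ρρ‖ ≤ γρ * β) :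
    ‖uu‖ ≤ ζ⁻¹ * (κg + κH * ω * κJ * κc) + ζ⁻¹ * ‖gω - gbar‖
      + ((1 + ζ⁻¹ * κH) * σbar⁻¹ * γr + ζ⁻¹ * γρ) * β := by
  set K : Submodule ℝ (EuclideanSpace ℝ (Fin n)) := LinearMap.ker J.toLinearMap with hK
  set z : EuclideanSpace ℝ (Fin n) := (K.orthogonalProjectionOnto uu : EuclideanSpace ℝ (Fin n))
  set w : EuclideanSpace ℝ (Fin n) := uu - z with hwdef
  have hzK : z ∈ K := (K.orthogonalProjectionOnto uu).2
  have hwo : w ∈ Kᗮ := K.sub_starProjection_mem_orthogonal uu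
  have hwrange : w ∈ LinearMap.range (J.adjoint).toLinearMap := stmt18_ker_orth J hwo
  have hJz : J z = 0 := hzK
  have hJw : J w = rr := by
    have : J w = J uu - J z := by simp [hwdef, map_sub]
    rw [this, hJz, h2, sub_zero]
  have hwnorm : ‖w‖ ≤ σbar⁻¹ * (γr * β) := by
    have h3 := hσlow w hwrange
    rw [hJw] at h3
    rw [le_inv_mul_iff₀ hσbar]
    linarith
  -- bound ‖J.adjoint c‖
  have hJc : ‖J.adjoint c‖ ≤ κJ * κc := by
    calc ‖J.adjoint c‖ ≤ ‖J.adjoint‖ * ‖c‖ := J.adjoint.le_opNorm c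
    _ = ‖J‖ * ‖c‖ := by rw [ContinuousLinearMap.adjoint.norm_map]
    _ ≤ κJ * κc := mul_le_mul hJbound hcbound (norm_nonneg c) hκJ.le
  have hHv : ‖H v‖ ≤ κH * ω * (κJ * κc) := by
    calc ‖H v‖ ≤ ‖H‖ * ‖v‖ := H.le_opNorm v
    _ ≤ κH * (ω * ‖J.adjoint c‖) := mul_le_mul hHnorm hv (norm_nonneg v) hκH.le
    _ ≤ κH * ω * (κJ * κc) := by
        rw [mul_assoc]
        exact mul_le_mul_of_nonneg_left (mul_le_mul_of_nonneg_left hJc hω.le) hκH.le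
  set C : ℝ := ‖gω - gbar‖ + κg + κH * ω * (κJ * κc) + γρ * β
      + κH * (σbar⁻¹ * (γr * β)) with hC
  have hCnn : 0 ≤ C := by
    have : (0:ℝ) ≤ κH * (σbar⁻¹ * (γr * β)) := by positivity
    have : (0:ℝ) ≤ κH * ω * (κJ * κc) := by positivity
    positivity
  have hgnorm : ‖gω‖ ≤ ‖gω - gbar‖ + κg := by
    calc ‖gω‖ = ‖(gω - gbar) + gbar‖ := by rw [sub_add_cancel]
    _ ≤ ‖gω - gbar‖ + ‖gbar‖ := norm_add_le _ _
    _ ≤ ‖gω - gbar‖ + κg := by linarith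
  -- key inner product inequality
  have hkey : ζ * ‖z‖ ^ 2 ≤ C * ‖z‖ := by
    have hHz : ζ * ‖z‖ ^ 2 ≤ ⟪H z, z⟫ := hHpd z hzK
    have hinner : ⟪H z, z⟫ = ⟪-(gω + H v) + ρρ - H w, z⟫ := by
      have hJy : ⟪J.adjoint yy, z⟫ = 0 := by
        rw [ContinuousLinearMap.adjoint_inner_left, hJz, inner_zero_right]
      have hu : (uu : EuclideanSpace ℝ (Fin n)) = z + w := by
        simp [hwdef]
      have : ⟪H uu + J.adjoint yy, z⟫ = ⟪-(gω + H v) + ρρ, z⟫ := by rw [h1]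
      rw [inner_add_left, hJy, add_zero, hu, map_add, inner_add_left] at this
      rw [inner_sub_left]
      linarith [this]
    have hcs : ⟪-(gω + H v) + ρρ - H w, z⟫ ≤ ‖-(gω + H v) + ρρ - H w‖ * ‖z‖ :=
      real_inner_le_norm _ _
    have hnb : ‖-(gω + H v) + ρρ - H w‖ ≤ C := by
      have hHw : ‖H w‖ ≤ κH * (σbar⁻¹ * (γr * β)) :=
        le_trans (H.le_opNorm w) (mul_le_mul hHnorm hwnorm (norm_nonneg w) hκH.le)
      calc ‖-(gω + H v) + ρρ - H w‖ ≤ ‖-(gω + H v) + ρρ‖ + ‖H w‖ := norm_sub_le _ _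
      _ ≤ ‖-(gω + H v)‖ + ‖ρρ‖ + ‖H w‖ := by linarith [norm_add_le (-(gω + H v)) ρρ]
      _ ≤ ‖gω‖ + ‖H v‖ + ‖ρρ‖ + ‖H w‖ := by
          rw [norm_neg]; linarith [norm_add_le gω (H v)]
      _ ≤ C := by rw [hC]; linarith
    calc ζ * ‖z‖ ^ 2 ≤ ⟪H z, z⟫ := hHz
    _ ≤ ‖-(gω + H v) + ρρ - H w‖ * ‖z‖ := by rw [hinner]; exact hcs
    _ ≤ C * ‖z‖ := mul_le_mul_of_nonneg_right hnb (norm_nonneg z)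
  have hznorm : ‖z‖ ≤ ζ⁻¹ * C := by
    rcases eq_or_lt_of_le (norm_nonneg z) with h0 | h0
    · rw [← h0]; positivity
    · have hzz : ζ * ‖z‖ ≤ C := by
        have h4 : ζ * ‖z‖ * ‖z‖ ≤ C * ‖z‖ := by
          have : ζ * ‖z‖ ^ 2 = ζ * ‖z‖ * ‖z‖ := by ring
          linarith [hkey, this ▸ hkey]
        exact le_of_mul_le_mul_right h4 h0
      rw [le_inv_mul_iff₀ hζ]
      exact hzz
  have := norm_add_le z w
  have huzw : uu = z + w := by simp [hwdef]
  rw [huzw]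
  calc ‖z + w‖ ≤ ‖z‖ + ‖w‖ := norm_add_le z w
  _ ≤ ζ⁻¹ * C + σbar⁻¹ * (γr * β) := add_le_add hznorm hwnorm
  _ = ζ⁻¹ * (κg + κH * ω * κJ * κc) + ζ⁻¹ * ‖gω - gbar‖
      + ((1 + ζ⁻¹ * κH) * σbar⁻¹ * γr + ζ⁻¹ * γρ) * β := by rw [hC]; ring

/-- Lemma 4.3 of the paper: upper bound on the expected squared norm of the inexact
stochastic tangential step, with explicit constants `κ_u` and `κ₄`. -/
theorem stmt18 {m n : ℕ}
    (J : EuclideanSpace ℝ (Fin n) →L[ℝ] EuclideanSpace ℝ (Fin m))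
    (c : EuclideanSpace ℝ (Fin m))
    (κJ κc σbar κH ζ : ℝ) (hκJ : 0 < κJ) (hκc : 0 < κc)
    (hσbar : 0 < σbar) (hκH : 0 < κH) (hζ : 0 < ζ)
    (hJbound : ‖J‖ ≤ κJ) (hcbound : ‖c‖ ≤ κc)
    (hσlow : ∀ w ∈ LinearMap.range (J.adjoint).toLinearMap, σbar * ‖w‖ ≤ ‖J w‖)
    (H : EuclideanSpace ℝ (Fin n) →L[ℝ] EuclideanSpace ℝ (Fin n))
    (hHsym : IsSelfAdjoint H) (hHnorm : ‖H‖ ≤ κH)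
    (hHpd : ∀ u ∈ LinearMap.ker J.toLinearMap, ζ * ‖u‖ ^ 2 ≤ ⟪H u, u⟫)
    (gbar v : EuclideanSpace ℝ (Fin n))
    (κg ω : ℝ) (hκg : 0 < κg) (hω : 0 < ω)
    (hgbar : ‖gbar‖ ≤ κg) (hv : ‖v‖ ≤ ω * ‖J.adjoint c‖)
    (β κβ γr γρ : ℝ) (hβ : 0 < β) (hβκβ : β ≤ κβ) (hγr : 0 < γr) (hγρ : 0 < γρ)
    {Ω : Type*} [MeasurableSpace Ω] (μ : Measure Ω) [IsProbabilityMeasure μ]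
    (g : Ω → EuclideanSpace ℝ (Fin n)) (hgL2 : MemLp g 2 μ)
    (hgmean : ∫ ω', g ω' ∂μ = gbar)
    (M : ℝ) (hM : 0 < M) (hgvar : ∫ ω', ‖g ω' - gbar‖ ^ 2 ∂μ ≤ M)
    (u : Ω → EuclideanSpace ℝ (Fin n))
    (y : Ω → EuclideanSpace ℝ (Fin m))
    (ρ : Ω → EuclideanSpace ℝ (Fin n)) (r : Ω → EuclideanSpace ℝ (Fin m))
    (hsys : ∀ᵐ ω' ∂μ,
      H (u ω') + J.adjoint (y ω') = -(g ω' + H v) + ρ ω' ∧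
      J (u ω') = r ω' ∧ ‖r ω'‖ ≤ γr * β ∧ ‖ρ ω'‖ ≤ γρ * β)
    (κu κ₄ : ℝ)
    (hκu : κu = ζ⁻¹ * (κg + κH * ω * κJ * κc))
    (hκ₄ : κ₄ = (1 + ζ⁻¹ * κH) * σbar⁻¹ * γr + ζ⁻¹ * γρ) :
    ∫ ω', ‖u ω'‖ ^ 2 ∂μ ≤ 2 * κu ^ 2 + 2 * (ζ⁻¹ * Real.sqrt M + κ₄ * κβ) ^ 2 := by
  have hζinv : (0:ℝ) < ζ⁻¹ := inv_pos.mpr hζ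
  have hκ₄pos : 0 < κ₄ := by
    rw [hκ₄]
    have h1 : (0:ℝ) < (1 + ζ⁻¹ * κH) * σbar⁻¹ * γr := by positivity
    positivity
  have hsqrtM : 0 ≤ Real.sqrt M := Real.sqrt_nonneg M
  -- RHS is nonnegative
  have hRHSnn : 0 ≤ 2 * κu ^ 2 + 2 * (ζ⁻¹ * Real.sqrt M + κ₄ * κβ) ^ 2 := by positivity
  set X : Ω → ℝ := fun ω' => ‖g ω' - gbar‖ with hX
  have hXmem : MemLp X 2 μ := (hgL2.sub (memLp_const gbar)).norm
  have hX1 : Integrable X μ := hXmem.integrable one_le_two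
  have hX2 : Integrable (fun ω' => X ω' ^ 2) μ := hXmem.integrable_sq
  have hEX2 : ∫ ω', X ω' ^ 2 ∂μ ≤ M := hgvar
  have hEXnn : 0 ≤ ∫ ω', X ω' ∂μ := integral_nonneg fun ω' => norm_nonneg _
  have hEXsq : (∫ ω', X ω' ∂μ) ^ 2 ≤ ∫ ω', X ω' ^ 2 ∂μ := by
    have hv0 := ProbabilityTheory.variance_nonneg X μ
    rw [ProbabilityTheory.variance_eq_sub hXmem] at hv0
    simp only [Pi.pow_apply] at hv0
    linarith
  have hEX : ∫ ω', X ω' ∂μ ≤ Real.sqrt M := by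
    have h1 : (∫ ω', X ω' ∂μ) ^ 2 ≤ M := le_trans hEXsq hEX2
    nlinarith [Real.sq_sqrt hM.le, Real.sqrt_nonneg M, hEXnn]
  -- a.e. pointwise bound
  have hae : ∀ᵐ ω' ∂μ, ‖u ω'‖ ^ 2 ≤ 2 * κu ^ 2 + 2 * (ζ⁻¹ * X ω' + κ₄ * β) ^ 2 := by
    filter_upwards [hsys] with ω' h
    obtain ⟨h1, h2, h3, h4⟩ := h
    have hb := stmt18_pointwise J c κJ κc σbar κH ζ hκJ hκc hσbar hκH hζ hJbound hcbound
      hσlow H hHnorm hHpd (g ω') gbar v κg ω hκg hω hgbar hv β γr γρ hβ hγr hγρ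
      (u ω') (y ω') (r ω') (ρ ω') h1 h2 h3 h4
    rw [← hκu, ← hκ₄] at hb
    have hq : 0 ≤ ζ⁻¹ * X ω' + κ₄ * β := by positivity
    have hb' : ‖u ω'‖ ≤ κu + (ζ⁻¹ * X ω' + κ₄ * β) := by
      simp only [hX]; linarith
    nlinarith [norm_nonneg (u ω'), sq_nonneg (κu - (ζ⁻¹ * X ω' + κ₄ * β))]
  -- integrability of the dominating function
  have hq2 : Integrable (fun ω' => (ζ⁻¹ * X ω' + κ₄ * β) ^ 2) μ :=
    ((hXmem.const_mul ζ⁻¹).add (memLp_const (κ₄ * β))).integrable_sq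
  have hF : Integrable (fun ω' => 2 * κu ^ 2 + 2 * (ζ⁻¹ * X ω' + κ₄ * β) ^ 2) μ :=
    (integrable_const _).add (hq2.const_mul 2)
  by_cases hInt : Integrable (fun ω' => ‖u ω'‖ ^ 2) μ
  · have hmono := integral_mono_ae hInt hF hae
    have hsplit : ∫ ω', (2 * κu ^ 2 + 2 * (ζ⁻¹ * X ω' + κ₄ * β) ^ 2) ∂μ
        = 2 * κu ^ 2 + 2 * ∫ ω', (ζ⁻¹ * X ω' + κ₄ * β) ^ 2 ∂μ := by
      rw [integral_add (integrable_const _) (hq2.const_mul 2), integral_const,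
        integral_const_mul]
      simp
    have hqexp : ∫ ω', (ζ⁻¹ * X ω' + κ₄ * β) ^ 2 ∂μ
        = ζ⁻¹ ^ 2 * ∫ ω', X ω' ^ 2 ∂μ
          + (2 * ζ⁻¹ * (κ₄ * β) * ∫ ω', X ω' ∂μ + (κ₄ * β) ^ 2) := by
      have : (fun ω' => (ζ⁻¹ * X ω' + κ₄ * β) ^ 2)
          = fun ω' => ζ⁻¹ ^ 2 * X ω' ^ 2 + (2 * ζ⁻¹ * (κ₄ * β) * X ω' + (κ₄ * β) ^ 2) :=
        funext fun ω' => by ring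
      have hA : Integrable (fun ω' => ζ⁻¹ ^ 2 * X ω' ^ 2) μ := hX2.const_mul _
      have hB : Integrable (fun ω' => 2 * ζ⁻¹ * (κ₄ * β) * X ω' + (κ₄ * β) ^ 2) μ := by
        have := (hX1.const_mul (2 * ζ⁻¹ * (κ₄ * β))).add (integrable_const ((κ₄ * β) ^ 2))
        exact this
      have hB1 : Integrable (fun ω' => 2 * ζ⁻¹ * (κ₄ * β) * X ω') μ := hX1.const_mul _
      rw [this, integral_add hA hB, integral_const_mul, integral_add hB1 (integrable_const _),
        integral_const_mul, integral_const]
      simp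
    have hqbound : ∫ ω', (ζ⁻¹ * X ω' + κ₄ * β) ^ 2 ∂μ ≤ (ζ⁻¹ * Real.sqrt M + κ₄ * β) ^ 2 := by
      rw [hqexp]
      have hMsq : Real.sqrt M ^ 2 = M := Real.sq_sqrt hM.le
      have h1 : ζ⁻¹ ^ 2 * ∫ ω', X ω' ^ 2 ∂μ ≤ ζ⁻¹ ^ 2 * M :=
        mul_le_mul_of_nonneg_left hEX2 (by positivity)
      have h2 : 2 * ζ⁻¹ * (κ₄ * β) * ∫ ω', X ω' ∂μ ≤ 2 * ζ⁻¹ * (κ₄ * β) * Real.sqrt M :=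
        mul_le_mul_of_nonneg_left hEX (by positivity)
      nlinarith
    have hfinal : (ζ⁻¹ * Real.sqrt M + κ₄ * β) ^ 2 ≤ (ζ⁻¹ * Real.sqrt M + κ₄ * κβ) ^ 2 := by
      have hle : ζ⁻¹ * Real.sqrt M + κ₄ * β ≤ ζ⁻¹ * Real.sqrt M + κ₄ * κβ := by
        have := mul_le_mul_of_nonneg_left hβκβ hκ₄pos.le
        linarith
      have h0 : 0 ≤ ζ⁻¹ * Real.sqrt M + κ₄ * β := by positivity
      nlinarith
    rw [hsplit] at hmono
    linarith
  · rw [integral_undef hInt]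
    exact hRHSnn
end
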